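/- arXiv:1701.00621 — 9 statements merged into one kernel-verified Lean document; each statement's English description precedes it below -/
import Mathlib

section
/- Let R be a unital *-ring and a ∈ R. Then a is *-DMP with index m if and only if a is Drazin invertible with index m and one of the following equivalent conditions holds: (1) a^D = a^D (a a^D)*; (2) a^D = (a^D a)* a^D; (3) a^D (1 − a a^D)* = (1 − a a^D)(a^D)*. -/
variable {R : Type*}

/-- `x` is a `{1,3}`-inverse of `a`. -/
def Is13Inv [Ring R] [StarRing R] (a x : R) : Prop :=
  a * x * a = a ∧ star (a * x) = a * x

/-- `x` is the Moore–Penrose inverse of `a`. -/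
def IsMPInv [Ring R] [StarRing R] (a x : R) : Prop :=
  a * x * a = a ∧ x * a * x = x ∧ star (a * x) = a * x ∧ star (x * a) = x * a

/-- `x` is the group inverse of `a`. -/
def IsGroupInv [Ring R] (a x : R) : Prop :=
  a * x * a = a ∧ x * a * x = x ∧ a * x = x * a

/-- `a` is EP: the group inverse and Moore–Penrose inverse of `a` exist and coincide. -/
def IsEP [Ring R] [StarRing R] (a : R) : Prop :=
  ∃ x, IsGroupInv a x ∧ IsMPInv a x

/-- `a` is *-DMP with index `m`: `m` is the smallest positive integer with `a^m` EP. -/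
def IsStarDMPWithIndex [Ring R] [StarRing R] (a : R) (m : ℕ) : Prop :=
  0 < m ∧ IsEP (a ^ m) ∧ ∀ k, 0 < k → IsEP (a ^ k) → m ≤ k

/-- `a` is *-DMP: some positive power of `a` is EP. -/
def IsStarDMP [Ring R] [StarRing R] (a : R) : Prop :=
  ∃ m, 0 < m ∧ IsEP (a ^ m)

/-- The defining equations of a Drazin inverse `x` of `a` relative to the exponent `m`. -/
def DrazinEqs [Ring R] (a x : R) (m : ℕ) : Prop :=
  a ^ m * x * a = a ^ m ∧ x * a * x = x ∧ a * x = x * a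

/-- `x` is the Drazin inverse of `a` with (minimal) index `m`. -/
def IsDrazinWithIndex [Ring R] (a x : R) (m : ℕ) : Prop :=
  0 < m ∧ DrazinEqs a x m ∧ ∀ k, 0 < k → (∃ y, DrazinEqs a y k) → m ≤ k

/-- The defining equations of a pseudo core inverse `x` of `a` relative to the exponent `m`. -/
def PCoreEqs [Ring R] [StarRing R] (a x : R) (m : ℕ) : Prop :=
  x * a ^ (m + 1) = a ^ m ∧ a * x ^ 2 = x ∧ star (a * x) = a * x

/-- `x` is the pseudo core inverse of `a` with (minimal) index `m`. -/
def IsPCoreWithIndex [Ring R] [StarRing R] (a x : R) (m : ℕ) : Prop :=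
  0 < m ∧ PCoreEqs a x m ∧ ∀ k y, 0 < k → PCoreEqs a y k → m ≤ k

/-- `x` is the pseudo core inverse of `a` (of some index). -/
def IsPCore [Ring R] [StarRing R] (a x : R) : Prop :=
  ∃ m, 0 < m ∧ PCoreEqs a x m

/-- `y` is the core inverse of `c`. -/
def IsCoreInv [Ring R] [StarRing R] (c y : R) : Prop :=
  y * c ^ 2 = c ∧ c * y ^ 2 = y ∧ star (c * y) = c * y

/-- The core partial order `c ≤⊕ d` for a core invertible `c`. -/
def CoreLE [Ring R] [StarRing R] (c d : R) : Prop :=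
  ∃ u, IsCoreInv c u ∧ u * c = u * d ∧ c * u = d * u

/-- The pseudo core order `a ≤Ⓓ b` for a pseudo core invertible `a`. -/
def PCoreLE [Ring R] [StarRing R] (a b : R) : Prop :=
  ∃ x, IsPCore a x ∧ x * a = x * b ∧ a * x = b * x


section AuxStarDMP

variable [Ring R]

private lemma aux_idem_pow {e : R} (h : e * e = e) (n : ℕ) : e ^ (n + 1) = e := by
  induction n with
  | zero => simp
  | succ n ih => rw [pow_succ, ih, h]

private lemma aux_x_pow {a x : R} (h2 : x * a * x = x) (h3 : a * x = x * a) (n : ℕ) :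
    x = x ^ (n + 1) * a ^ n := by
  have hx2a : x * (x * a) = x := by rw [← h3, ← mul_assoc, h2]
  induction n with
  | zero => simp
  | succ n ih =>
    have : x ^ (n + 1 + 1) * a ^ (n + 1) = x := by
      rw [pow_succ' x, pow_succ a, mul_assoc, ← mul_assoc (x ^ (n + 1)), ← ih, hx2a]
    exact this.symm

private lemma aux_base {a d : R} {k : ℕ} (h1 : a ^ k * d * a = a ^ k) (h3 : a * d = d * a) :
    a ^ (k + 1) * d = a ^ k := by
  rw [pow_succ, mul_assoc, h3, ← mul_assoc, h1]

private lemma aux_pow_mul {a x : R} {m : ℕ} (h1 : a ^ m * x * a = a ^ m)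
    (h3 : a * x = x * a) (j : ℕ) : a ^ (j + (m + 1)) * x = a ^ (j + m) := by
  rw [pow_add, mul_assoc, aux_base h1 h3, ← pow_add]

private lemma aux_drazin_unique {a x y : R} {j k : ℕ}
    (hx : DrazinEqs a x j) (hy : DrazinEqs a y k) : x = y := by
  obtain ⟨hx1, hx2, hx3⟩ := hx
  obtain ⟨hy1, hy2, hy3⟩ := hy
  have cax : Commute a x := hx3
  have cay : Commute a y := hy3
  set n := j + k with hn
  have e1 : x = x ^ (n + 1) * a ^ n := aux_x_pow hx2 hx3 n
  have e2 : a ^ (n + 1) * y = a ^ n := by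
    have h := aux_pow_mul hy1 hy3 j
    rwa [show j + (k + 1) = n + 1 by omega, show j + k = n from rfl] at h
  have hxa_idem : (x * a) * (x * a) = x * a := by rw [← mul_assoc, hx2]
  have exy : x = x * a * y := by
    calc x = x ^ (n + 1) * a ^ n := e1
      _ = x ^ (n + 1) * (a ^ (n + 1) * y) := by rw [e2]
      _ = (x ^ (n + 1) * a ^ (n + 1)) * y := by rw [mul_assoc]
      _ = (x * a) ^ (n + 1) * y := by rw [(cax.symm.mul_pow (n + 1) : (x*a)^(n+1) = _)]
      _ = x * a * y := by rw [aux_idem_pow hxa_idem n]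
  have hay_idem : (a * y) * (a * y) = a * y := by
    rw [mul_assoc a y (a * y), ← mul_assoc y a y, hy2]
  have eyx : y = x * a * y := by
    have e3 : y = a ^ n * y ^ (n + 1) := by
      rw [(cay.pow_pow n (n + 1)).eq]
      exact aux_x_pow hy2 hy3 n
    have e4 : x * a ^ (n + 1) = a ^ n := by
      have h := aux_pow_mul hx1 hx3 k
      rw [show k + (j + 1) = n + 1 by omega, show k + j = n by omega] at h
      rw [← (cax.pow_left (n + 1)).eq]
      exact h
    calc y = a ^ n * y ^ (n + 1) := e3
      _ = (x * a ^ (n + 1)) * y ^ (n + 1) := by rw [e4]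
      _ = x * (a ^ (n + 1) * y ^ (n + 1)) := by rw [mul_assoc]
      _ = x * (a * y) ^ (n + 1) := by rw [cay.mul_pow (n + 1)]
      _ = x * (a * y) := by rw [aux_idem_pow hay_idem n]
      _ = x * a * y := by rw [mul_assoc]
  rw [exy, ← eyx]

private lemma aux_group_comm {a x : R} {k : ℕ}
    (h1 : a ^ k * x * a ^ k = a ^ k) (h2 : x * a ^ k * x = x) (h3 : a ^ k * x = x * a ^ k) :
    a * x = x * a := by
  set c := a ^ k with hc
  have hb : a * c = c * a := ((Commute.refl a).pow_right k).eq
  have hccx : c * (c * x) = c := by rw [h3, ← mul_assoc, h1]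
  have hAB : (c * x) * a * (c * x) = (c * x) * a := by
    calc (c * x) * a * (c * x) = (x * c) * a * (c * x) := by rw [h3]
      _ = x * (c * a) * (c * x) := by rw [mul_assoc x c a]
      _ = x * (a * c) * (c * x) := by rw [hb]
      _ = x * a * (c * (c * x)) := by rw [← mul_assoc x a c, mul_assoc (x * a) c (c * x)]
      _ = x * a * c := by rw [hccx]
      _ = x * (a * c) := by rw [mul_assoc]
      _ = x * (c * a) := by rw [hb]
      _ = (x * c) * a := by rw [mul_assoc]
      _ = (c * x) * a := by rw [h3]
  have hBC : (c * x) * a * (c * x) = a * (c * x) := by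
    calc (c * x) * a * (c * x) = (c * x) * (a * c) * x := by
          rw [mul_assoc (c * x) a (c * x), ← mul_assoc a c x, ← mul_assoc (c * x) (a * c) x]
      _ = (c * x) * (c * a) * x := by rw [hb]
      _ = ((c * x) * c) * (a * x) := by
          rw [← mul_assoc (c * x) c a, mul_assoc (c * x * c) a x]
      _ = c * (a * x) := by rw [h1]
      _ = (c * a) * x := by rw [mul_assoc]
      _ = (a * c) * x := by rw [hb]
      _ = a * (c * x) := by rw [mul_assoc]
  have hcomm_e : (c * x) * a = a * (c * x) := hAB.symm.trans hBC
  have hxe : x * (c * x) = x := by rw [← mul_assoc]; exact h2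
  have hex : (c * x) * x = x := by rw [h3]; exact h2
  symm
  calc x * a = (x * (c * x)) * a := by rw [hxe]
    _ = x * ((c * x) * a) := by rw [mul_assoc]
    _ = x * (a * (c * x)) := by rw [hcomm_e]
    _ = (x * a) * (c * x) := by rw [mul_assoc]
    _ = x * (a * c) * x := by rw [← mul_assoc (x * a) c x, mul_assoc x a c]
    _ = x * (c * a) * x := by rw [hb]
    _ = (x * c) * (a * x) := by rw [← mul_assoc x c a, mul_assoc (x * c) a x]
    _ = (c * x) * (a * x) := by rw [h3]
    _ = ((c * x) * a) * x := by rw [mul_assoc (c * x) a x]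
    _ = (a * (c * x)) * x := by rw [hcomm_e]
    _ = a * ((c * x) * x) := by rw [mul_assoc]
    _ = a * x := by rw [hex]

private lemma aux_ep_to_drazin [StarRing R] {a x : R} {k : ℕ} (hk : 0 < k)
    (hg : IsGroupInv (a ^ k) x) (hmp : IsMPInv (a ^ k) x) :
    DrazinEqs a (a ^ (k - 1) * x) k ∧
      star (a * (a ^ (k - 1) * x)) = a * (a ^ (k - 1) * x) := by
  obtain ⟨h1, h2, h3⟩ := hg
  have hcomm : a * x = x * a := aux_group_comm h1 h2 h3
  have hak : a * a ^ (k - 1) = a ^ k := by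
    rw [← pow_succ']; congr 1; omega
  have hka : a ^ (k - 1) * a = a ^ k := by
    rw [← pow_succ]; congr 1; omega
  have had : a * (a ^ (k - 1) * x) = a ^ k * x := by rw [← mul_assoc, hak]
  have hccx : a ^ k * (a ^ k * x) = a ^ k := by rw [h3, ← mul_assoc, h1]
  have hd1 : a ^ k * (a ^ (k - 1) * x) * a = a ^ k := by
    calc a ^ k * (a ^ (k - 1) * x) * a = a ^ k * (a ^ (k - 1) * (x * a)) := by
          rw [mul_assoc, mul_assoc]
      _ = a ^ k * (a ^ (k - 1) * (a * x)) := by rw [hcomm]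
      _ = a ^ k * ((a ^ (k - 1) * a) * x) := by rw [mul_assoc]
      _ = a ^ k * (a ^ k * x) := by rw [hka]
      _ = a ^ k := hccx
  have hd2 : (a ^ (k - 1) * x) * a * (a ^ (k - 1) * x) = a ^ (k - 1) * x := by
    calc (a ^ (k - 1) * x) * a * (a ^ (k - 1) * x)
        = (a ^ (k - 1) * x) * (a * (a ^ (k - 1) * x)) := by rw [mul_assoc]
      _ = (a ^ (k - 1) * x) * (a ^ k * x) := by rw [had]
      _ = a ^ (k - 1) * (x * (a ^ k * x)) := by rw [mul_assoc]
      _ = a ^ (k - 1) * (x * a ^ k * x) := by rw [← mul_assoc x]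
      _ = a ^ (k - 1) * x := by rw [h2]
  have hd3 : a * (a ^ (k - 1) * x) = (a ^ (k - 1) * x) * a := by
    calc a * (a ^ (k - 1) * x) = a ^ k * x := had
      _ = (a ^ (k - 1) * a) * x := by rw [hka]
      _ = a ^ (k - 1) * (a * x) := by rw [mul_assoc]
      _ = a ^ (k - 1) * (x * a) := by rw [hcomm]
      _ = (a ^ (k - 1) * x) * a := by rw [mul_assoc]
  refine ⟨⟨hd1, hd2, hd3⟩, ?_⟩
  rw [had]
  exact hmp.2.2.1

private lemma aux_drazin_to_ep [StarRing R] {a d : R} {k : ℕ} (hk : 0 < k)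
    (hpow : a ^ (k + 1) * d = a ^ k) (h2 : d * a * d = d) (h3 : a * d = d * a)
    (hstar : star (a * d) = a * d) : IsEP (a ^ k) := by
  obtain ⟨k', rfl⟩ : ∃ k', k = k' + 1 := ⟨k - 1, by omega⟩
  set k := k' + 1 with hkdef
  have cad : Commute a d := h3
  have had_idem : (a * d) * (a * d) = a * d := by
    rw [mul_assoc a d (a * d), ← mul_assoc d a d, h2]
  have hda_idem : (d * a) * (d * a) = d * a := by rw [← mul_assoc, h2]
  have hpows : a ^ k * d ^ k = a * d := by
    rw [← cad.mul_pow k, hkdef, aux_idem_pow had_idem k']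
  have hpows' : d ^ k * a ^ k = d * a := by
    rw [← cad.symm.mul_pow k, hkdef, aux_idem_pow hda_idem k']
  have g1 : a ^ k * d ^ k * a ^ k = a ^ k := by
    calc a ^ k * d ^ k * a ^ k = (a * d) * a ^ k := by rw [hpows]
      _ = a * (d * a ^ k) := by rw [mul_assoc]
      _ = a * (a ^ k * d) := by rw [(cad.symm.pow_right k).eq]
      _ = (a * a ^ k) * d := by rw [mul_assoc]
      _ = a ^ (k + 1) * d := by rw [← pow_succ']
      _ = a ^ k := hpow
  have g2 : d ^ k * a ^ k * d ^ k = d ^ k := by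
    calc d ^ k * a ^ k * d ^ k = (d * a) * d ^ k := by rw [hpows']
      _ = (d * a) * (d * d ^ k') := by rw [hkdef, pow_succ' d]
      _ = (d * a * d) * d ^ k' := by rw [← mul_assoc]
      _ = d * d ^ k' := by rw [h2]
      _ = d ^ k := by rw [← pow_succ']
  have g3 : a ^ k * d ^ k = d ^ k * a ^ k := (cad.pow_pow k k).eq
  refine ⟨d ^ k, ⟨g1, g2, g3⟩, g1, g2, ?_, ?_⟩
  · rw [hpows]; exact hstar
  · rw [← g3, hpows]; exact hstar

private lemma aux_main [StarRing R] {a : R} {m : ℕ} :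
    IsStarDMPWithIndex a m ↔ ∃ d, IsDrazinWithIndex a d m ∧ star (a * d) = a * d := by
  constructor
  · rintro ⟨hm, ⟨x, hg, hmp⟩, hmin⟩
    obtain ⟨hde, hstar⟩ := aux_ep_to_drazin hm hg hmp
    refine ⟨a ^ (m - 1) * x, ⟨hm, hde, ?_⟩, hstar⟩
    rintro k hk ⟨y, hy⟩
    have hyd : y = a ^ (m - 1) * x := aux_drazin_unique hy hde
    rw [hyd] at hy
    exact hmin k hk
      (aux_drazin_to_ep hk (aux_base hy.1 hy.2.2) hy.2.1 hy.2.2 hstar)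
  · rintro ⟨d, ⟨hm, hde, hmin⟩, hstar⟩
    refine ⟨hm, ?_, ?_⟩
    · exact aux_drazin_to_ep hm (aux_base hde.1 hde.2.2) hde.2.1 hde.2.2 hstar
    · rintro k hk ⟨x, hg, hmp⟩
      exact hmin k hk ⟨a ^ (k - 1) * x, (aux_ep_to_drazin hk hg hmp).1⟩

private lemma aux_s12 [StarRing R] {a d : R} (h2 : d * a * d = d) (h3 : a * d = d * a) :
    star (a * d) = a * d ↔ d = d * star (a * d) := by
  constructor
  · intro h
    rw [h, ← mul_assoc]
    exact h2.symm
  · intro hd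
    have key : a * d = (a * d) * star (a * d) := by
      conv_lhs => rw [hd]
      rw [← mul_assoc]
    calc star (a * d) = star ((a * d) * star (a * d)) := by rw [← key]
      _ = star (star (a * d)) * star (a * d) := by rw [star_mul]
      _ = (a * d) * star (a * d) := by rw [star_star]
      _ = a * d := key.symm

private lemma aux_s13 [StarRing R] {a d : R} (h2 : d * a * d = d) (h3 : a * d = d * a) :
    star (a * d) = a * d ↔ d = star (d * a) * d := by
  constructor
  · intro h
    rw [← h3, h, h3]
    exact h2.symm
  · intro hd
    have key : d * a = star (d * a) * (d * a) := by
      conv_lhs => rw [hd]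
      rw [mul_assoc]
    have : star (d * a) = d * a := by
      calc star (d * a) = star (star (d * a) * (d * a)) := by rw [← key]
        _ = star (d * a) * star (star (d * a)) := by rw [star_mul]
        _ = star (d * a) * (d * a) := by rw [star_star]
        _ = d * a := key.symm
    rw [h3]
    exact this

private lemma aux_s14 [StarRing R] {a d : R} (h2 : d * a * d = d) (h3 : a * d = d * a) :
    star (a * d) = a * d ↔ d * star (1 - a * d) = (1 - a * d) * star d := by
  have hadd : (a * d) * d = d := by rw [h3]; exact h2
  have had_idem : (a * d) * (a * d) = a * d := by
    rw [mul_assoc a d (a * d), ← mul_assoc d a d, h2]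
  constructor
  · intro h
    have hzero1 : d * star (1 - a * d) = 0 := by
      rw [star_sub, star_one, h, mul_sub, mul_one, ← mul_assoc, h2, sub_self]
    have hadstar : (a * d) * star d = star d := by
      have key : star ((a * d) * star d) = star (star d) := by
        rw [star_mul, star_star, h, ← mul_assoc, h2]
      exact star_injective key
    have hzero2 : (1 - a * d) * star d = 0 := by
      rw [sub_mul, one_mul, hadstar, sub_self]
    rw [hzero1, hzero2]
  · intro heq
    have h5 : d * star (1 - a * d) = 0 := by
      have h6 := congrArg (fun z => (a * d) * z) heq
      rw [← mul_assoc, hadd, ← mul_assoc, mul_sub, mul_one, had_idem, sub_self,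
        zero_mul] at h6
      exact h6
    rw [star_sub, star_one, mul_sub, mul_one] at h5
    exact (aux_s12 h2 h3).mpr (sub_eq_zero.mp h5)

end AuxStarDMP

/-- Theorem 2.6: `a` is *-DMP with index `m` iff `a` is Drazin invertible with index `m`
and any one of the three listed conditions on `a^D` holds. -/
theorem stmt_3 [Ring R] [StarRing R] (a : R) (m : ℕ) :
    List.TFAE
      [ IsStarDMPWithIndex a m,
        ∃ d, IsDrazinWithIndex a d m ∧ d = d * star (a * d),
        ∃ d, IsDrazinWithIndex a d m ∧ d = star (d * a) * d,
        ∃ d, IsDrazinWithIndex a d m ∧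
          d * star (1 - a * d) = (1 - a * d) * star d ] := by
  tfae_have 1 ↔ 2 := by
    rw [aux_main]
    exact exists_congr fun d => and_congr_right fun hdz =>
      aux_s12 hdz.2.1.2.1 hdz.2.1.2.2
  tfae_have 2 ↔ 3 := by
    refine exists_congr fun d => and_congr_right fun hdz => ?_
    rw [← aux_s12 hdz.2.1.2.1 hdz.2.1.2.2, aux_s13 hdz.2.1.2.1 hdz.2.1.2.2]
  tfae_have 2 ↔ 4 := by
    refine exists_congr fun d => and_congr_right fun hdz => ?_
    rw [← aux_s12 hdz.2.1.2.1 hdz.2.1.2.2, aux_s14 hdz.2.1.2.1 hdz.2.1.2.2]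
  tfae_finish
end

section
/- Let R be a unital *-ring and a, b ∈ R with a b = b a = 0 and a* b = 0. If both a and b are *-DMP, then a + b is *-DMP. -/
variable {R : Type*}

private lemma ep_pow [Ring R] [StarRing R] {c x : R}
    (hg : IsGroupInv c x) (hm : IsMPInv c x) (n : ℕ) :
    IsGroupInv (c ^ n) (x ^ n) ∧ IsMPInv (c ^ n) (x ^ n) := by
  obtain ⟨h1, h2, h3⟩ := hg
  obtain ⟨_, _, h4, h5⟩ := hm
  have hcx : Commute c x := h3
  have hcxc : Commute (c * x) c := (Commute.refl c).mul_left hcx.symm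
  have hxcx : Commute (x * c) x := (Commute.refl x).mul_left hcx
  have e1 : c ^ n * x ^ n * c ^ n = c ^ n := by
    have := hcxc.mul_pow n
    rw [h1, hcx.mul_pow] at this
    exact this.symm
  have e2 : x ^ n * c ^ n * x ^ n = x ^ n := by
    have := hxcx.mul_pow n
    rw [h2, hcx.symm.mul_pow] at this
    exact this.symm
  have e3 : c ^ n * x ^ n = x ^ n * c ^ n := hcx.pow_pow n n
  have e4 : star (c ^ n * x ^ n) = c ^ n * x ^ n := by
    rw [← hcx.mul_pow, star_pow, h4]
  have e5 : star (x ^ n * c ^ n) = x ^ n * c ^ n := by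
    rw [← hcx.symm.mul_pow, star_pow, h5]
  exact ⟨⟨e1, e2, e3⟩, ⟨e1, e2, e4, e5⟩⟩

private lemma mul_pow_zero [Ring R] {a b : R} (h : a * b = 0) (i j : ℕ) :
    a ^ (i + 1) * b ^ (j + 1) = 0 := by
  have : a ^ (i + 1) * b ^ (j + 1) = a ^ i * (a * b) * b ^ j := by
    rw [pow_succ a i, pow_succ' b j]
    noncomm_ring
  rw [this, h, mul_zero, zero_mul]

private lemma add_pow_eq [Ring R] {a b : R} (h1 : a * b = 0) (h2 : b * a = 0)
    (n : ℕ) (hn : 0 < n) : (a + b) ^ n = a ^ n + b ^ n := by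
  induction n, hn using Nat.le_induction with
  | base => simp
  | succ n hn ih =>
    obtain ⟨n', rfl⟩ : ∃ n', n = n' + 1 := ⟨n - 1, (Nat.succ_pred_eq_of_pos hn).symm⟩
    have hab : a ^ (n' + 1) * b = 0 := by
      have := mul_pow_zero h1 n' 0
      simpa using this
    have hba : b ^ (n' + 1) * a = 0 := by
      have := mul_pow_zero h2 n' 0
      simpa using this
    calc (a + b) ^ (n' + 1 + 1) = (a + b) ^ (n' + 1) * (a + b) := pow_succ _ _
      _ = (a ^ (n' + 1) + b ^ (n' + 1)) * (a + b) := by rw [ih]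
      _ = a ^ (n' + 1) * a + a ^ (n' + 1) * b + (b ^ (n' + 1) * a + b ^ (n' + 1) * b) := by
          rw [add_mul, mul_add, mul_add]
      _ = a ^ (n' + 1 + 1) + b ^ (n' + 1 + 1) := by
          rw [hab, hba, ← pow_succ a, ← pow_succ b]; abel

private lemma ep_add [Ring R] [StarRing R] {p q x y : R}
    (hpq : p * q = 0) (hqp : q * p = 0)
    (hgx : IsGroupInv p x) (hmx : IsMPInv p x)
    (hgy : IsGroupInv q y) (hmy : IsMPInv q y) :
    IsGroupInv (p + q) (x + y) ∧ IsMPInv (p + q) (x + y) := by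
  obtain ⟨px1, px2, px3⟩ := hgx
  obtain ⟨qy1, qy2, qy3⟩ := hgy
  obtain ⟨_, _, sx1, sx2⟩ := hmx
  obtain ⟨_, _, sy1, sy2⟩ := hmy
  have hx2 : x = x * x * p := by
    conv_lhs => rw [← px2]
    rw [mul_assoc, px3, ← mul_assoc]
  have hx3 : x = p * x * x := by
    conv_lhs => rw [← px2]
    rw [← px3]
  have hy2 : y = y * y * q := by
    conv_lhs => rw [← qy2]
    rw [mul_assoc, qy3, ← mul_assoc]
  have hy3 : y = q * y * y := by
    conv_lhs => rw [← qy2]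
    rw [← qy3]
  have hxq : x * q = 0 := by rw [hx2, mul_assoc, hpq, mul_zero]
  have hqx : q * x = 0 := by rw [hx3, ← mul_assoc, ← mul_assoc, hqp, zero_mul, zero_mul]
  have hyp : y * p = 0 := by rw [hy2, mul_assoc, hqp, mul_zero]
  have hpy : p * y = 0 := by rw [hy3, ← mul_assoc, ← mul_assoc, hpq, zero_mul, zero_mul]
  have key1 : (p + q) * (x + y) = p * x + q * y := by
    rw [add_mul, mul_add, mul_add, hpy, hqx]
    abel
  have key2 : (x + y) * (p + q) = x * p + y * q := by
    rw [add_mul, mul_add, mul_add, hxq, hyp]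
    abel
  have comm : (p + q) * (x + y) = (x + y) * (p + q) := by
    rw [key1, key2, px3, qy3]
  have t1 : (p + q) * (x + y) * (p + q) = p + q := by
    rw [key1, add_mul, mul_add, mul_add, mul_assoc p x q, hxq, mul_zero,
      mul_assoc q y p, hyp, mul_zero, px1, qy1]
    abel
  have t2 : (x + y) * (p + q) * (x + y) = x + y := by
    rw [key2, add_mul, mul_add, mul_add, mul_assoc x p y, hpy, mul_zero,
      mul_assoc y q x, hqx, mul_zero, px2, qy2]
    abel
  have s1 : star ((p + q) * (x + y)) = (p + q) * (x + y) := by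
    rw [key1, star_add, sx1, sy1]
  have s2 : star ((x + y) * (p + q)) = (x + y) * (p + q) := by
    rw [key2, star_add, sx2, sy2]
  exact ⟨⟨t1, t2, comm⟩, ⟨t1, t2, s1, s2⟩⟩

/-- Theorem 2.16: if `a b = b a = 0`, `a* b = 0` and both `a` and `b` are *-DMP,
then `a + b` is *-DMP. -/
theorem stmt_10 [Ring R] [StarRing R] (a b : R)
    (h1 : a * b = 0) (h2 : b * a = 0) (h3 : star a * b = 0)
    (ha : IsStarDMP a) (hb : IsStarDMP b) :
    IsStarDMP (a + b) := by
  obtain ⟨m, hm, xa, hga, hma⟩ := ha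
  obtain ⟨n, hn, xb, hgb, hmb⟩ := hb
  have hmn : 0 < m * n := Nat.mul_pos hm hn
  refine ⟨m * n, hmn, ?_⟩
  have hPa := ep_pow hga hma n
  have hPb := ep_pow hgb hmb m
  rw [← pow_mul] at hPa
  rw [← pow_mul'] at hPb
  have hk : m * n = (m * n - 1) + 1 := (Nat.succ_pred_eq_of_pos hmn).symm
  have z1 : a ^ (m * n) * b ^ (m * n) = 0 := by rw [hk]; exact mul_pow_zero h1 _ _
  have z2 : b ^ (m * n) * a ^ (m * n) = 0 := by rw [hk]; exact mul_pow_zero h2 _ _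
  have e : (a + b) ^ (m * n) = a ^ (m * n) + b ^ (m * n) := add_pow_eq h1 h2 _ hmn
  rw [e]
  exact ⟨xa ^ n + xb ^ m, ep_add z1 z2 hPa.1 hPa.2 hPb.1 hPb.2⟩
end

section
/- Let R be a unital *-ring and a ∈ R with a pseudo core inverse a^Ⓓ of index m. Then there exist unique elements a₁, a₂ ∈ R such that a = a₁ + a₂, a₁ is group invertible, a₂^m = 0, and a₁* a₂ = a₂ a₁ = 0; moreover a₁ = a a^Ⓓ a and a₂ = a − a a^Ⓓ a. -/
variable {R : Type*}

/-- Theorems 3.1 and 3.2 (pseudo core decomposition): if `x` is the pseudo core inverse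
of `a` with index `m`, then `a₁ = a x a`, `a₂ = a - a x a` give the unique decomposition
`a = a₁ + a₂` with `a₁` group invertible, `a₂^m = 0` and `a₁* a₂ = a₂ a₁ = 0`. -/
theorem stmt_11 [Ring R] [StarRing R] (a x : R) (m : ℕ)
    (h : IsPCoreWithIndex a x m) :
    (a = a * x * a + (a - a * x * a) ∧
      (∃ y, IsGroupInv (a * x * a) y) ∧
      (a - a * x * a) ^ m = 0 ∧
      star (a * x * a) * (a - a * x * a) = 0 ∧
      (a - a * x * a) * (a * x * a) = 0) ∧
    ∀ a₁ a₂ : R,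
      (a = a₁ + a₂ ∧ (∃ y, IsGroupInv a₁ y) ∧ a₂ ^ m = 0 ∧
        star a₁ * a₂ = 0 ∧ a₂ * a₁ = 0) →
      a₁ = a * x * a ∧ a₂ = a - a * x * a := by
  obtain ⟨hm, ⟨h1, h2, h3⟩, -⟩ := h
  obtain ⟨n, rfl⟩ := Nat.exists_eq_succ_of_ne_zero hm.ne'
  have h2' : a * (x * x) = x := by rw [← pow_two]; exact h2
  -- A1 : a^k x^(k+1) = x
  have A1 : ∀ k : ℕ, a ^ k * x ^ (k+1) = x := by
    intro k
    induction k with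
    | zero => simp
    | succ k ih =>
      calc a ^ (k+1) * x ^ (k+1+1) = a * ((a ^ k * x ^ (k+1)) * x) := by
            rw [pow_succ' a k, pow_succ x (k+1)]; noncomm_ring
        _ = a * (x * x) := by rw [ih]
        _ = x := h2'
  -- A2 : a x a^(n+1) = a^(n+1)
  have A2 : a * x * a ^ (n+1) = a ^ (n+1) := by
    calc a * x * a ^ (n+1) = a * x * (x * a ^ (n+1+1)) := by rw [h1]
      _ = a * (x * x) * a ^ (n+1+1) := by noncomm_ring
      _ = x * a ^ (n+1+1) := by rw [h2']
      _ = a ^ (n+1) := h1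
  have A2k : ∀ j : ℕ, a * x * a ^ (n+1+j) = a ^ (n+1+j) := by
    intro j
    calc a * x * a ^ (n+1+j) = a * x * (a ^ (n+1) * a ^ j) := by rw [pow_add a (n+1) j]
      _ = (a * x * a ^ (n+1)) * a ^ j := by noncomm_ring
      _ = a ^ (n+1) * a ^ j := by rw [A2]
      _ = a ^ (n+1+j) := (pow_add a (n+1) j).symm
  -- A3 : x a x = x
  have A3 : x * a * x = x := by
    calc x * a * x = x * a * (a ^ (n+1) * x ^ (n+1+1)) := by rw [A1 (n+1)]
      _ = x * (a * a ^ (n+1)) * x ^ (n+1+1) := by noncomm_ring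
      _ = x * a ^ (n+1+1) * x ^ (n+1+1) := by rw [← pow_succ' a (n+1)]
      _ = a ^ (n+1) * x ^ (n+1+1) := by rw [h1]
      _ = x := A1 (n+1)
  have A4a : x * x * a ^ (n+1+1+1) = a ^ (n+1) := by
    calc x * x * a ^ (n+1+1+1) = x * (x * a ^ (n+1+1)) * a := by
          rw [pow_succ a (n+1+1)]; noncomm_ring
      _ = x * a ^ (n+1) * a := by rw [h1]
      _ = x * a ^ (n+1+1) := by rw [pow_succ a (n+1)]; noncomm_ring
      _ = a ^ (n+1) := h1
  have A4 : x * x * (a * a) * x = x := by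
    calc x * x * (a * a) * x = x * x * (a * a) * (a ^ (n+1) * x ^ (n+1+1)) := by
          rw [A1 (n+1)]
      _ = (x * x * a ^ (n+1+1+1)) * x ^ (n+1+1) := by
          rw [pow_succ' a (n+1+1), pow_succ' a (n+1)]; noncomm_ring
      _ = a ^ (n+1) * x ^ (n+1+1) := by rw [A4a]
      _ = x := A1 (n+1)
  have A5 : ∀ k : ℕ, a * x * (a ^ (k+1) * x) = a ^ (k+1) * x := by
    intro k
    have e1 : a ^ (k+1) * x = a ^ (n+1+(k+1)) * x ^ (n+1+1) := by
      calc a ^ (k+1) * x = a ^ (k+1) * (a ^ (n+1) * x ^ (n+1+1)) := by rw [A1 (n+1)]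
        _ = (a ^ (k+1) * a ^ (n+1)) * x ^ (n+1+1) := by noncomm_ring
        _ = a ^ ((k+1)+(n+1)) * x ^ (n+1+1) := by rw [← pow_add a (k+1) (n+1)]
        _ = a ^ (n+1+(k+1)) * x ^ (n+1+1) := by rw [Nat.add_comm (k+1) (n+1)]
    calc a * x * (a ^ (k+1) * x) = a * x * (a ^ (n+1+(k+1)) * x ^ (n+1+1)) := by rw [e1]
      _ = (a * x * a ^ (n+1+(k+1))) * x ^ (n+1+1) := by noncomm_ring
      _ = a ^ (n+1+(k+1)) * x ^ (n+1+1) := by rw [A2k (k+1)]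
      _ = a ^ (k+1) * x := e1.symm
  have hA : (a*x*a) * (x*x*a) = x*a := by
    calc (a*x*a) * (x*x*a) = a*x*(a*(x*x))*a := by noncomm_ring
      _ = a*x*x*a := by rw [h2']
      _ = a*(x*x)*a := by noncomm_ring
      _ = x*a := by rw [h2']
  have hB : (x*x*a) * (a*x*a) = x*a := by
    calc (x*x*a) * (a*x*a) = (x*x*(a*a)*x)*a := by noncomm_ring
      _ = x*a := by rw [A4]
  constructor
  · refine ⟨by abel, ⟨x*x*a, ?_, ?_, ?_⟩, ?_, ?_, ?_⟩
    · -- a₁ y a₁ = a₁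
      calc (a*x*a) * (x*x*a) * (a*x*a) = (a*x*a) * ((x*x*a) * (a*x*a)) := by noncomm_ring
        _ = (a*x*a) * (x*a) := by rw [hB]
        _ = a*(x*a*x)*a := by noncomm_ring
        _ = a*x*a := by rw [A3]
    · -- y a₁ y = y
      calc (x*x*a) * (a*x*a) * (x*x*a) = (x*a) * (x*x*a) := by rw [hB]
        _ = (x*a*x)*(x*a) := by noncomm_ring
        _ = x*(x*a) := by rw [A3]
        _ = x*x*a := by noncomm_ring
    · rw [hA, hB]
    · -- a₂ ^ (n+1) = 0
      have B1 : ∀ k : ℕ, (a - a*x*a) ^ (k+1) = a ^ (k+1) - a*x*a ^ (k+1) := by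
        intro k
        induction k with
        | zero => simp
        | succ k ih =>
          have ee : a ^ (k+1) * (a*x) = a ^ (k+1+1) * x := by
            rw [pow_succ a (k+1)]; noncomm_ring
          calc (a - a*x*a) ^ (k+1+1) = (a - a*x*a) ^ (k+1) * (a - a*x*a) := pow_succ _ _
            _ = (a ^ (k+1) - a*x*a ^ (k+1)) * (a - a*x*a) := by rw [ih]
            _ = (a ^ (k+1) * a - a*x*(a ^ (k+1) * a))
                - (a ^ (k+1) * (a*x) - a*x*(a ^ (k+1) * (a*x)))*a := by noncomm_ring
            _ = (a ^ (k+1+1) - a*x*a ^ (k+1+1))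
                - (a ^ (k+1+1) * x - a*x*(a ^ (k+1+1) * x))*a := by
                  rw [← pow_succ a (k+1), ee]
            _ = a ^ (k+1+1) - a*x*a ^ (k+1+1) := by rw [A5 (k+1)]; noncomm_ring
      rw [B1 n, A2, sub_self]
    · -- star a₁ * a₂ = 0
      have hstar : star (a*x*a) = star a * (a*x) := by rw [star_mul, h3]
      have e : a*x*(a*x*a) = a*x*a := by
        calc a*x*(a*x*a) = a*(x*a*x)*a := by noncomm_ring
          _ = a*x*a := by rw [A3]
      calc star (a*x*a) * (a - a*x*a) = star a * (a*x) * (a - a*x*a) := by rw [hstar]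
        _ = star a * (a*x*a - a*x*(a*x*a)) := by noncomm_ring
        _ = star a * (a*x*a - a*x*a) := by rw [e]
        _ = 0 := by rw [sub_self, mul_zero]
    · -- a₂ * a₁ = 0
      have h5 := A5 1
      rw [pow_two] at h5
      have e : a*x*(a*(a*x)) = a*(a*x) := by
        calc a*x*(a*(a*x)) = a*x*(a*a*x) := by noncomm_ring
          _ = a*a*x := h5
          _ = a*(a*x) := by noncomm_ring
      calc (a - a*x*a)*(a*x*a) = a*(a*x)*a - (a*x*(a*(a*x)))*a := by noncomm_ring
        _ = a*(a*x)*a - (a*(a*x))*a := by rw [e]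
        _ = 0 := by noncomm_ring
  · rintro a₁ a₂ ⟨ha, ⟨y, hy1, hy2, hy3⟩, hn, hs, h21⟩
    have U1 : ∀ k : ℕ, a₂ * a ^ k = a₂ ^ (k+1) := by
      intro k
      induction k with
      | zero => simp
      | succ k ih =>
        calc a₂ * a ^ (k+1) = (a₂ * a ^ k) * a := by rw [pow_succ a k]; noncomm_ring
          _ = a₂ ^ (k+1) * (a₁ + a₂) := by rw [ih, ← ha]
          _ = a₂ ^ k * (a₂*a₁) + a₂ ^ (k+1) * a₂ := by rw [pow_succ a₂ k]; noncomm_ring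
          _ = a₂ ^ (k+1) * a₂ := by rw [h21]; noncomm_ring
          _ = a₂ ^ (k+1+1) := (pow_succ a₂ (k+1)).symm
    have U2 : a₂ * x = 0 := by
      calc a₂ * x = a₂ * (a ^ (n+1) * x ^ (n+1+1)) := by rw [A1 (n+1)]
        _ = (a₂ * a ^ (n+1)) * x ^ (n+1+1) := by noncomm_ring
        _ = (a₂ ^ (n+1) * a₂) * x ^ (n+1+1) := by rw [U1 (n+1), pow_succ a₂ (n+1)]
        _ = 0 := by rw [hn]; noncomm_ring
    have U3a : a * x = a₁ * x := by rw [ha, add_mul, U2, add_zero]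
    have U3b : a * x * a₂ = 0 := by
      rw [← h3, U3a, star_mul, mul_assoc, hs, mul_zero]
    have U3 : x * a₂ = 0 := by
      calc x * a₂ = (x*a*x)*a₂ := by rw [A3]
        _ = x * (a*x*a₂) := by noncomm_ring
        _ = 0 := by rw [U3b, mul_zero]
    have U4 : ∀ k : ℕ, a ^ k * a₁ = a₁ ^ (k+1) := by
      intro k
      induction k with
      | zero => simp
      | succ k ih =>
        calc a ^ (k+1) * a₁ = a * (a ^ k * a₁) := by rw [pow_succ' a k]; noncomm_ring
          _ = a * a₁ ^ (k+1) := by rw [ih]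
          _ = (a₁ + a₂) * (a₁ * a₁ ^ k) := by rw [← ha, pow_succ' a₁ k]
          _ = a₁ * (a₁ * a₁ ^ k) + (a₂*a₁)*a₁ ^ k := by noncomm_ring
          _ = a₁ * (a₁ * a₁ ^ k) := by rw [h21]; noncomm_ring
          _ = a₁ ^ (k+1+1) := by rw [pow_succ' a₁ (k+1), pow_succ' a₁ k]
    have U6 : a * (a₁ * y) = a₁ := by
      calc a * (a₁*y) = (a₁+a₂)*(a₁*y) := by rw [← ha]
        _ = a₁*(a₁*y) + (a₂*a₁)*y := by noncomm_ring
        _ = a₁*(a₁*y) := by rw [h21]; noncomm_ring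
        _ = a₁*(y*a₁) := by rw [hy3]
        _ = (a₁*y)*a₁ := by noncomm_ring
        _ = a₁ := hy1
    have U7 : a ^ (n+1) * (a₁ * y) = a₁ ^ (n+1) := by
      calc a ^ (n+1) * (a₁*y) = a ^ n * (a * (a₁*y)) := by rw [pow_succ a n]; noncomm_ring
        _ = a ^ n * a₁ := by rw [U6]
        _ = a₁ ^ (n+1) := U4 n
    have U8 : a * x * a₁ ^ (n+1) = a₁ ^ (n+1) := by
      calc a * x * a₁ ^ (n+1) = a * x * (a ^ (n+1) * (a₁*y)) := by rw [U7]
        _ = (a * x * a ^ (n+1)) * (a₁*y) := by noncomm_ring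
        _ = a ^ (n+1) * (a₁*y) := by rw [A2]
        _ = a₁ ^ (n+1) := U7
    have hc : Commute a₁ y := hy3
    have U9 : ∀ k : ℕ, a₁ ^ (k+1) * y ^ k = a₁ := by
      intro k
      induction k with
      | zero => simp
      | succ k ih =>
        calc a₁ ^ (k+1+1) * y ^ (k+1) = a₁ ^ (k+1) * (a₁ * y ^ k) * y := by
              rw [pow_succ a₁ (k+1), pow_succ y k]; noncomm_ring
          _ = a₁ ^ (k+1) * (y ^ k * a₁) * y := by rw [(hc.pow_right k).eq]
          _ = (a₁ ^ (k+1) * y ^ k) * (a₁ * y) := by noncomm_ring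
          _ = a₁ * (a₁ * y) := by rw [ih]
          _ = a₁ * (y * a₁) := by rw [hy3]
          _ = (a₁ * y) * a₁ := by noncomm_ring
          _ = a₁ := hy1
    have e : star a₁ = star (y ^ n) * star (a₁ ^ (n+1)) := by
      rw [← star_mul, U9 n]
    have U10 : star a₁ * (a*x) = star a₁ := by
      calc star a₁ * (a*x) = (star (y ^ n) * star (a₁ ^ (n+1))) * (a*x) := by rw [e]
        _ = star (y ^ n) * star ((a*x) * a₁ ^ (n+1)) := by rw [star_mul, h3]; noncomm_ring
        _ = star (y ^ n) * star (a₁ ^ (n+1)) := by rw [U8]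
        _ = star a₁ := e.symm
    have U11 : a * x * a₁ = a₁ := by
      have e2 := congrArg star U10
      rw [star_mul, star_star, h3] at e2
      exact e2
    have U12 : a * x * a = a₁ := by
      calc a*x*a = a*x*(a₁+a₂) := by rw [← ha]
        _ = a*x*a₁ + a*x*a₂ := by noncomm_ring
        _ = a₁ + 0 := by rw [U11, U3b]
        _ = a₁ := add_zero a₁
    refine ⟨U12.symm, ?_⟩
    rw [U12, ha]
    abel
end

section
/- Let R be a unital *-ring and a ∈ R with a pseudo core inverse a^Ⓓ of index m, and let a₁ = a a^Ⓓ a. Then a₁ is core invertible and a₁^⊕ = a^Ⓓ, i.e., a^Ⓓ satisfies a^Ⓓ a₁^2 = a₁, a₁ (a^Ⓓ)^2 = a^Ⓓ and (a₁ a^Ⓓ)* = a₁ a^Ⓓ. -/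
variable {R : Type*}

/-- Theorem 3.3: if `x` is the pseudo core inverse of `a` with index `m` and
`a₁ = a x a`, then `x` is the core inverse of `a₁`. -/
theorem stmt_12 [Ring R] [StarRing R] (a x : R) (m : ℕ)
    (h : IsPCoreWithIndex a x m) :
    IsCoreInv (a * x * a) x := by
  obtain ⟨hm, ⟨h1, h2, h3⟩, -⟩ := h
  have hA : ∀ k : ℕ, a ^ k * x ^ (k + 1) = x := by
    intro k
    induction k with
    | zero => simp
    | succ n ih =>
      calc a ^ (n + 1) * x ^ (n + 2)
          = a ^ n * ((a * x ^ 2) * x ^ n) := by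
            rw [pow_succ a n, show n + 2 = 2 + n by omega, pow_add x 2 n]
            simp only [mul_assoc]
        _ = a ^ n * (x * x ^ n) := by rw [h2]
        _ = a ^ n * x ^ (n + 1) := by rw [← pow_succ']
        _ = x := ih
  have hB : ∀ k : ℕ, a ^ (k + 1) * x ^ (k + 1) = a * x := by
    intro k
    induction k with
    | zero => simp
    | succ n ih =>
      calc a ^ (n + 2) * x ^ (n + 2)
          = a ^ (n + 1) * ((a * x ^ 2) * x ^ n) := by
            rw [pow_succ a (n + 1), show n + 2 = 2 + n by omega, pow_add x 2 n]
            simp only [mul_assoc]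
        _ = a ^ (n + 1) * (x * x ^ n) := by rw [h2]
        _ = a ^ (n + 1) * x ^ (n + 1) := by rw [← pow_succ']
        _ = a * x := ih
  have hxax : x * a * x = x := by
    calc x * a * x = x * a * (a ^ m * x ^ (m + 1)) := by rw [hA m]
      _ = x * a ^ (m + 1) * x ^ (m + 1) := by
          rw [pow_succ' a m]; simp only [mul_assoc]
      _ = a ^ m * x ^ (m + 1) := by rw [h1]
      _ = x := hA m
  have hxa2x : x * a ^ 2 * x = a * x := by
    calc x * a ^ 2 * x = x * a ^ 2 * (a ^ m * x ^ (m + 1)) := by rw [hA m]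
      _ = x * (a ^ 2 * a ^ m) * x ^ (m + 1) := by simp only [mul_assoc]
      _ = x * (a ^ (m + 1) * a) * x ^ (m + 1) := by
          rw [← pow_add a 2 m, show 2 + m = m + 1 + 1 by omega, pow_succ a (m + 1)]
      _ = x * a ^ (m + 1) * (a * x ^ (m + 1)) := by simp only [mul_assoc]
      _ = a ^ m * (a * x ^ (m + 1)) := by rw [h1]
      _ = a ^ (m + 1) * x ^ (m + 1) := by rw [pow_succ a m, mul_assoc]
      _ = a * x := hB m
  have haxax : a * x * a * x = a * x := by
    calc a * x * a * x = a * (x * a * x) := by simp only [mul_assoc]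
      _ = a * x := by rw [hxax]
  refine ⟨?_, ?_, ?_⟩
  · calc x * (a * x * a) ^ 2
        = x * a * x * (a * (a * x * a)) := by rw [pow_two]; simp only [mul_assoc]
      _ = x * (a * (a * x * a)) := by rw [hxax]
      _ = x * a ^ 2 * x * a := by rw [pow_two]; simp only [mul_assoc]
      _ = a * x * a := by rw [hxa2x]
  · calc (a * x * a) * x ^ 2 = (a * x * a * x) * x := by rw [pow_two, ← mul_assoc]
      _ = a * x * x := by rw [haxax]
      _ = a * x ^ 2 := by rw [pow_two, ← mul_assoc]
      _ = x := h2
  · rw [mul_assoc, mul_assoc] at haxax ⊢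
    rw [show a * (x * (a * x)) = a * x from haxax, h3]
end

section
/- Let R be a unital *-ring and a ∈ R with a pseudo core inverse a^Ⓓ of index m, and let a₁ = a a^Ⓓ a. Then a is *-DMP with index m if and only if a₁ is EP. -/
variable {R : Type*}

private theorem dblComm {R : Type*} [Ring R] {c g u : R} (h1 : c * g * c = c)
    (h2 : g * c * g = g) (h3 : c * g = g * c) (h4 : u * c = c * u) :
    u * g = g * u := by
  have hcgg : (c * g) * g = g := by rw [h3, h2]
  have hgcg : g * (c * g) = g := by rw [← mul_assoc, ← h3, hcgg]
  have hcc : c * (c * g) = c := by rw [h3, ← mul_assoc, h1]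
  have k1 : u * (c * g) = c * (u * g) := by rw [← mul_assoc, h4, mul_assoc]
  have k4 : g * (u * (c * g)) = (c * g) * (u * g) := by
    rw [k1, ← mul_assoc, ← h3]
  have k5 : (c * g) * (u * (c * g)) = u * (c * g) := by
    calc (c*g) * (u*(c*g)) = c * (g * (u * (c*g))) := by noncomm_ring
      _ = c * ((c*g) * (u*g)) := by rw [k4]
      _ = (c * (c*g)) * (u*g) := by noncomm_ring
      _ = c * (u*g) := by rw [hcc]
      _ = u * (c*g) := k1.symm
  have k3 : ((c*g) * u) * (c*g) = (c*g) * u := by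
    calc ((c*g)*u)*(c*g) = ((g*c)*u)*(c*g) := by rw [h3]
      _ = (g*(u*c))*(c*g) := by rw [mul_assoc g c u, ← h4]
      _ = g*(u*(c*(c*g))) := by noncomm_ring
      _ = g*(u*c) := by rw [hcc]
      _ = (g*c)*u := by rw [h4, ← mul_assoc]
      _ = (c*g)*u := by rw [h3]
  have k6 : u * (c*g) = (c*g) * u := by
    calc u*(c*g) = (c*g)*(u*(c*g)) := k5.symm
      _ = ((c*g)*u)*(c*g) := by noncomm_ring
      _ = (c*g)*u := k3
  calc u*g = u*((c*g)*g) := by rw [hcgg]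
    _ = (u*(c*g))*g := by noncomm_ring
    _ = ((c*g)*u)*g := by rw [k6]
    _ = (c*g)*(u*g) := by noncomm_ring
    _ = g*(u*(c*g)) := k4.symm
    _ = g*((c*g)*u) := by rw [k6]
    _ = (g*(c*g))*u := by noncomm_ring
    _ = g*u := by rw [hgcg]

/-- Theorem 3.4: if `x` is the pseudo core inverse of `a` with index `m` and
`a₁ = a x a`, then `a` is *-DMP with index `m` iff `a₁` is EP. -/
theorem stmt_13 [Ring R] [StarRing R] (a x : R) (m : ℕ)
    (h : IsPCoreWithIndex a x m) :
    IsStarDMPWithIndex a m ↔ IsEP (a * x * a) := by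
  obtain ⟨hm, hpc, hmin⟩ := h
  obtain ⟨n, rfl⟩ : ∃ n, m = n + 1 := ⟨m - 1, by omega⟩
  obtain ⟨hx1', hx2, hx3⟩ := hpc
  have hx1 : x * a ^ (n+2) = a ^ (n+1) := by
    rw [show n+2 = n+1+1 from rfl]; exact hx1'
  -- basic consequences of the pseudo core equations
  have pcA : ∀ k : ℕ, a * x ^ (k+2) = x ^ (k+1) := by
    intro k
    calc a * x ^ (k+2) = a * (x^2 * x^k) := by
          rw [show k+2 = 2+k from by omega, pow_add]
      _ = (a * x^2) * x^k := by rw [mul_assoc]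
      _ = x * x^k := by rw [hx2]
      _ = x ^ (k+1) := (pow_succ' x k).symm
  have pcB : ∀ k : ℕ, a ^ k * x ^ (k+1) = x := by
    intro k
    induction k with
    | zero => simp
    | succ k ih =>
      calc a ^ (k+1) * x ^ (k+2) = (a^k * a) * x^(k+2) := by rw [pow_succ]
        _ = a^k * (a * x^(k+2)) := by rw [mul_assoc]
        _ = a^k * x^(k+1) := by rw [pcA k]
        _ = x := ih
  have pcC : ∀ k : ℕ, a ^ (k+1) * x ^ (k+1) = a * x := by
    intro k
    induction k with
    | zero => simp
    | succ k ih =>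
      calc a ^ (k+2) * x ^ (k+2) = (a^(k+1) * a) * x^(k+2) := by rw [pow_succ]
        _ = a^(k+1) * (a * x^(k+2)) := by rw [mul_assoc]
        _ = a^(k+1) * x^(k+1) := by rw [pcA k]
        _ = a * x := ih
  have pc_xax : x * a * x = x := by
    calc x * a * x = x * a * (a^(n+1) * x^(n+2)) := by rw [pcB (n+1)]
      _ = (x * (a * a^(n+1))) * x^(n+2) := by noncomm_ring
      _ = (x * a^(n+2)) * x^(n+2) := by rw [← pow_succ']
      _ = a^(n+1) * x^(n+2) := by rw [hx1]
      _ = x := pcB (n+1)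
  have pc_axax : (a*x) * (a*x) = a*x := by
    calc (a*x)*(a*x) = a * (x*a*x) := by noncomm_ring
      _ = a * x := by rw [pc_xax]
  have pc_axam : a * x * a^(n+1) = a^(n+1) := by
    calc a*x*a^(n+1) = a*x*(x*a^(n+2)) := by rw [hx1]
      _ = (a * x^2) * a^(n+2) := by rw [pow_two]; noncomm_ring
      _ = x * a^(n+2) := by rw [hx2]
      _ = a^(n+1) := hx1
  have e1 : (a*x*a)*x = a*x := by
    calc (a*x*a)*x = (a*x)*(a*x) := by noncomm_ring
      _ = a*x := pc_axax
  have e1' : x*(a*x*a) = x*a := by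
    calc x*(a*x*a) = (x*a*x)*a := by noncomm_ring
      _ = x*a := by rw [pc_xax]
  -- Step 1: if a^(n+1) is EP then a*x = x*a
  have comm_of_EP : ∀ g : R, a^(n+1) * g * a^(n+1) = a^(n+1) → g * a^(n+1) * g = g →
      a^(n+1) * g = g * a^(n+1) → star (a^(n+1) * g) = a^(n+1) * g → a * x = x * a := by
    intro g hg1 hg2 hg3 hg4
    have hag : a * g = g * a := dblComm hg1 hg2 hg3 ((Commute.refl a).pow_right (n+1)).eq
    have hqp : (a^(n+1)*g) * (a*x) = a*x := by
      calc (a^(n+1)*g) * (a*x) = (a^(n+1)*g) * (a^(n+1)*x^(n+1)) := by rw [pcC n]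
        _ = (a^(n+1)*g*a^(n+1)) * x^(n+1) := by noncomm_ring
        _ = a^(n+1) * x^(n+1) := by rw [hg1]
        _ = a*x := pcC n
    have hpq : (a*x) * (a^(n+1)*g) = a^(n+1)*g := by
      calc (a*x) * (a^(n+1)*g) = (a*x*a^(n+1)) * g := by noncomm_ring
        _ = a^(n+1)*g := by rw [pc_axam]
    have hkey : a * x = a^(n+1)*g := by
      calc a*x = (a^(n+1)*g)*(a*x) := hqp.symm
        _ = star (a^(n+1)*g) * star (a*x) := by rw [hg4, hx3]
        _ = star ((a*x)*(a^(n+1)*g)) := (star_mul _ _).symm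
        _ = star (a^(n+1)*g) := by rw [hpq]
        _ = a^(n+1)*g := hg4
    calc a*x = a^(n+1)*g := hkey
      _ = x*a^(n+2)*g := by rw [hx1]
      _ = x*(a^(n+1)*(a*g)) := by rw [pow_succ]; noncomm_ring
      _ = x*(a^(n+1)*(g*a)) := by rw [hag]
      _ = (x*(a^(n+1)*g))*a := by noncomm_ring
      _ = (x*(a*x))*a := by rw [← hkey]
      _ = (x*a*x)*a := by noncomm_ring
      _ = x*a := by rw [pc_xax]
  -- Step 2: if a*x = x*a then a*x*a is EP with witness x
  have EP_a1_of_comm : a * x = x * a →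
      (a*x*a) * x * (a*x*a) = a*x*a ∧ x * (a*x*a) * x = x ∧ (a*x*a) * x = x * (a*x*a)
        ∧ star ((a*x*a) * x) = (a*x*a) * x ∧ star (x * (a*x*a)) = x * (a*x*a) := by
    intro hc
    have e2 : x*(a*x*a) = a*x := by
      calc x*(a*x*a) = (x*a)*(x*a) := by noncomm_ring
        _ = (a*x)*(a*x) := by rw [← hc]
        _ = a*x := pc_axax
    refine ⟨?_, ?_, ?_, ?_, ?_⟩
    · rw [e1]
      calc (a*x)*(a*x*a) = ((a*x)*(a*x))*a := by noncomm_ring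
        _ = a*x*a := by rw [pc_axax]
    · rw [e2, mul_assoc, ← pow_two, hx2]
    · rw [e1, e2]
    · rw [e1]; exact hx3
    · rw [e2]; exact hx3
  -- Step 3: if a*x*a is EP (witness w) then x = w, hence a*x = x*a
  have comm_of_EP_a1 : ∀ w : R, (a*x*a) * w * (a*x*a) = a*x*a → w * (a*x*a) * w = w →
      (a*x*a) * w = w * (a*x*a) → star ((a*x*a) * w) = (a*x*a) * w → a * x = x * a := by
    intro w hw1 hw2 hw3 hwst
    have hpa1 : (a*x)*(a*x*a) = a*x*a := by
      calc (a*x)*(a*x*a) = ((a*x)*(a*x))*a := by noncomm_ring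
        _ = a*x*a := by rw [pc_axax]
    have hfp : ((a*x*a)*w)*(a*x) = a*x := by
      calc ((a*x*a)*w)*(a*x) = ((a*x*a)*w)*((a*x*a)*x) := by rw [e1]
        _ = ((a*x*a)*w*(a*x*a))*x := by noncomm_ring
        _ = (a*x*a)*x := by rw [hw1]
        _ = a*x := e1
    have hpf : (a*x)*((a*x*a)*w) = (a*x*a)*w := by
      calc (a*x)*((a*x*a)*w) = ((a*x)*(a*x*a))*w := by noncomm_ring
        _ = (a*x*a)*w := by rw [hpa1]
    have hfeq : a*x = (a*x*a)*w := by
      calc a*x = ((a*x*a)*w)*(a*x) := hfp.symm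
        _ = star ((a*x*a)*w) * star (a*x) := by rw [hwst, hx3]
        _ = star ((a*x)*((a*x*a)*w)) := (star_mul _ _).symm
        _ = star ((a*x*a)*w) := by rw [hpf]
        _ = (a*x*a)*w := hwst
    have hxw : x = w := by
      calc x = a * x^2 := hx2.symm
        _ = (a*x)*x := by rw [pow_two, mul_assoc]
        _ = ((a*x*a)*w)*x := congrArg (· * x) hfeq
        _ = (w*(a*x*a))*x := by rw [← hw3]
        _ = w*((a*x*a)*x) := by noncomm_ring
        _ = w*(a*x) := by rw [e1]
        _ = w*((a*x*a)*w) := congrArg (w * ·) hfeq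
        _ = w*(a*x*a)*w := by noncomm_ring
        _ = w := hw2
    calc a*x = (a*x*a)*x := e1.symm
      _ = (a*x*a)*w := by rw [← hxw]
      _ = w*(a*x*a) := hw3
      _ = x*(a*x*a) := by rw [← hxw]
      _ = x*a := e1'
  -- Step 4: if a*x = x*a then a^(n+1) is EP with witness x^(n+1)
  have EP_pow_of_comm : a * x = x * a →
      a^(n+1) * x^(n+1) * a^(n+1) = a^(n+1) ∧ x^(n+1) * a^(n+1) * x^(n+1) = x^(n+1) ∧
      a^(n+1) * x^(n+1) = x^(n+1) * a^(n+1) ∧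
      star (a^(n+1) * x^(n+1)) = a^(n+1) * x^(n+1) ∧
      star (x^(n+1) * a^(n+1)) = x^(n+1) * a^(n+1) := by
    intro hc
    have hcom : Commute a x := hc
    have hxpap : x^(n+1) * a^(n+1) = a^(n+1) * x^(n+1) := ((hcom.symm).pow_pow (n+1) (n+1)).eq
    refine ⟨?_, ?_, hxpap.symm, ?_, ?_⟩
    · rw [pcC n]; exact pc_axam
    · rw [hxpap, pcC n, mul_assoc, ← pow_succ', pcA n]
    · rw [pcC n]; exact hx3
    · rw [hxpap, pcC n]; exact hx3
  constructor
  · intro hdmp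
    obtain ⟨g, ⟨hg1, hg2, hg3⟩, -, -, hg4, -⟩ := hdmp.2.1
    obtain ⟨p1, p2, p3, p4, p5⟩ := EP_a1_of_comm (comm_of_EP g hg1 hg2 hg3 hg4)
    exact ⟨x, ⟨p1, p2, p3⟩, p1, p2, p4, p5⟩
  · intro hEP1
    obtain ⟨w, ⟨hw1, hw2, hw3⟩, -, -, hwst, -⟩ := hEP1
    have hc := comm_of_EP_a1 w hw1 hw2 hw3 hwst
    obtain ⟨q1, q2, q3, q4, q5⟩ := EP_pow_of_comm hc
    refine ⟨Nat.succ_pos n, ⟨x^(n+1), ⟨q1, q2, q3⟩, q1, q2, q4, q5⟩, ?_⟩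
    intro k hk hEPk
    obtain ⟨j, rfl⟩ : ∃ j, k = j + 1 := ⟨k - 1, by omega⟩
    obtain ⟨g, ⟨hg1, hg2, hg3⟩, -, -, hg4, -⟩ := hEPk
    have hag : a * g = g * a := dblComm hg1 hg2 hg3 ((Commute.refl a).pow_right (j+1)).eq
    have hC : Commute a g := hag
    have hgap : ∀ i : ℕ, g * a^i = a^i * g := fun i => ((hC.pow_left i).eq).symm
    have haaj : a * a^j = a^(j+1) := (pow_succ' a j).symm
    refine hmin (j+1) (a^j * g) hk ⟨?_, ?_, ?_⟩
    · calc (a^j*g) * a^(j+1+1) = a^j * (g * a^(j+2)) := by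
            rw [mul_assoc, show j+1+1 = j+2 from rfl]
        _ = a^j * (a^(j+2) * g) := by rw [hgap]
        _ = (a^j * a^(j+2)) * g := by rw [mul_assoc]
        _ = (a^(j+1) * a^(j+1)) * g := by
            rw [← pow_add, ← pow_add, show j+(j+2) = j+1+(j+1) from by omega]
        _ = a^(j+1) * (g * a^(j+1)) := by rw [mul_assoc, hgap]
        _ = a^(j+1) * g * a^(j+1) := by rw [mul_assoc]
        _ = a^(j+1) := hg1
    · calc a * (a^j*g)^2 = a * ((a^j*g)*(a^j*g)) := by rw [pow_two]
        _ = (a * a^j) * ((g * a^j) * g) := by noncomm_ring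
        _ = a^(j+1) * ((a^j * g) * g) := by rw [haaj, hgap]
        _ = (a^(j+1) * a^j) * (g * g) := by noncomm_ring
        _ = (a^j * a^(j+1)) * (g * g) := by
            rw [← pow_add, ← pow_add, show j+1+j = j+(j+1) from by omega]
        _ = a^j * ((a^(j+1) * g) * g) := by noncomm_ring
        _ = a^j * ((g * a^(j+1)) * g) := by rw [hg3]
        _ = a^j * (g * a^(j+1) * g) := by rw [mul_assoc]
        _ = a^j * g := by rw [hg2]
    · rw [← mul_assoc, haaj]; exact hg4
end

section
/- Let R be a unital *-ring. The pseudo core order ≤Ⓓ is a pre-order on the set of pseudo core invertible elements of R: it is reflexive, and if a, b, c are pseudo core invertible with a ≤Ⓓ b and b ≤Ⓓ c, then a ≤Ⓓ c. -/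
variable {R : Type*}

/-- Auxiliary: if `b * x = e` and `e * x = x` then `b^(k+1) * x^(k+1) = e`. -/
lemma aux_pow_mul_s14 [Ring R] (b x e : R) (hb : b * x = e) (he : e * x = x) :
    ∀ k, b ^ (k + 1) * x ^ (k + 1) = e := by
  intro k
  induction k with
  | zero => simpa using hb
  | succ k ih =>
    rw [pow_succ' b (k + 1), pow_succ x (k + 1), mul_assoc b,
      ← mul_assoc (b ^ (k + 1)), ih, he, hb]

/-- Theorem 4.2: the pseudo core order is a pre-order on the set of pseudo core
invertible elements: it is reflexive and transitive. -/
theorem stmt_14 [Ring R] [StarRing R] :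
    (∀ a : R, (∃ x, IsPCore a x) → PCoreLE a a) ∧
    (∀ a b c : R, (∃ x, IsPCore a x) → (∃ x, IsPCore b x) → (∃ x, IsPCore c x) →
      PCoreLE a b → PCoreLE b c → PCoreLE a c) := by
  constructor
  · rintro a ⟨x, hx⟩
    exact ⟨x, hx, rfl, rfl⟩
  · rintro a b c _ _ _ ⟨x, hxp, hxa, hax⟩ ⟨y, hyp, hyb, hby⟩
    obtain ⟨m, hm, hx1, hx2, hx3⟩ := hxp
    obtain ⟨n, hn, hy1, hy2, hy3⟩ := hyp
    obtain ⟨m', rfl⟩ : ∃ m', m = m' + 1 := ⟨m - 1, by omega⟩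
    obtain ⟨n', rfl⟩ : ∃ n', n = n' + 1 := ⟨n - 1, by omega⟩
    -- basic consequences
    have he : a * x * x = x := by rw [mul_assoc, ← pow_two, hx2]
    have hey : b * y * y = y := by rw [mul_assoc, ← pow_two, hy2]
    have hpow_a : ∀ k, a ^ (k + 1) * x ^ (k + 1) = a * x :=
      aux_pow_mul_s14 a x (a * x) rfl he
    have hpow_b : ∀ k, b ^ (k + 1) * x ^ (k + 1) = a * x :=
      aux_pow_mul_s14 b x (a * x) hax.symm he
    -- x * (a * x) = x
    have hxax : x * (a * x) = x := by
      calc x * (a * x) = x * (a ^ (m' + 2) * x ^ (m' + 2)) := by rw [hpow_a (m' + 1)]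
        _ = (x * a ^ (m' + 2)) * x ^ (m' + 2) := by rw [mul_assoc]
        _ = a ^ (m' + 1) * x ^ (m' + 2) := by rw [hx1]
        _ = a ^ (m' + 1) * x ^ (m' + 1) * x := by rw [pow_succ x (m' + 1), mul_assoc]
        _ = a * x * x := by rw [hpow_a m']
        _ = x := he
    -- a * x = y * (b * (a * x))
    have haxy : a * x = y * (b * (a * x)) := by
      calc a * x = b ^ (n' + 1) * x ^ (n' + 1) := (hpow_b n').symm
        _ = (y * b ^ (n' + 2)) * x ^ (n' + 1) := by rw [hy1]
        _ = y * (b * (b ^ (n' + 1) * x ^ (n' + 1))) := by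
            rw [mul_assoc, pow_succ' b (n' + 1), mul_assoc b]
        _ = y * (b * (a * x)) := by rw [hpow_b n']
    -- c * x = a * x
    have hcx : c * x = a * x := by
      have hcax : c * (a * x) = b * (a * x) := by
        calc c * (a * x) = c * (y * (b * (a * x))) := by rw [← haxy]
          _ = (c * y) * (b * (a * x)) := by rw [mul_assoc]
          _ = (b * y) * (b * (a * x)) := by rw [hby]
          _ = b * (y * (b * (a * x))) := by rw [mul_assoc]
          _ = b * (a * x) := by rw [← haxy]
      calc c * x = c * (a * x * x) := by rw [he]
        _ = (c * (a * x)) * x := by rw [← mul_assoc, ← mul_assoc]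
        _ = (b * (a * x)) * x := by rw [hcax]
        _ = b * (a * x * x) := by rw [mul_assoc, mul_assoc]
        _ = b * x := by rw [he]
        _ = a * x := hax.symm
    -- a * x = b * y * (a * x)
    have hbye : a * x = b * y * (a * x) := by
      calc a * x = y * (b * (a * x)) := haxy
        _ = b * y ^ 2 * (b * (a * x)) := by rw [hy2]
        _ = b * y * (y * (b * (a * x))) := by
            rw [pow_two, ← mul_assoc b y y, mul_assoc (b * y) y]
        _ = b * y * (a * x) := by rw [← haxy]
    -- a * x = (a * x) * (b * y), by applying star
    have hef : a * x = a * x * (b * y) := by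
      have h := congrArg star hbye
      rwa [hx3, star_mul, hx3, hy3] at h
    -- (a * x) * c = (a * x) * a
    have hec : a * x * c = a * x * a := by
      calc a * x * c = a * x * (b * y) * c := by rw [← hef]
        _ = a * x * (b * (y * c)) := by rw [mul_assoc (a * x) (b * y) c, mul_assoc b y c]
        _ = a * x * (b * (y * b)) := by rw [← hyb]
        _ = a * x * (b * y) * b := by rw [mul_assoc (a * x) (b * y) b, mul_assoc b y b]
        _ = a * x * b := by rw [← hef]
        _ = a * (x * b) := by rw [mul_assoc]
        _ = a * (x * a) := by rw [← hxa]
        _ = a * x * a := by rw [mul_assoc]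
    -- x * c = x * a
    have hxc : x * c = x * a := by
      calc x * c = (x * (a * x)) * c := by rw [hxax]
        _ = x * (a * x * c) := by rw [mul_assoc]
        _ = x * (a * x * a) := by rw [hec]
        _ = (x * (a * x)) * a := by rw [← mul_assoc]
        _ = x * a := by rw [hxax]
    exact ⟨x, ⟨m' + 1, hm, hx1, hx2, hx3⟩, hxc.symm, hcx.symm⟩
end

section
/- Let R be a unital *-ring, let a, b ∈ R be pseudo core invertible with pseudo core indices I(a), I(b), let k = max{I(a), I(b)}, and let a₁ = a a^Ⓓ a, b₁ = b b^Ⓓ b. Then the following are equivalent: (1) a ≤Ⓓ b; (2) a^{k+1} = b a^k and a* a^k = b* a^k; (3) a₁ ≤⊕ b₁. -/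
variable {R : Type*}

section Aux
variable [Ring R] [StarRing R] {a x : R} {m : ℕ}

/-- x = a^j * x^(j+1) -/
lemma pc_x_eq (h : PCoreEqs a x m) (j : ℕ) : x = a ^ j * x ^ (j + 1) := by
  induction j with
  | zero => simp
  | succ j ih =>
    calc x = a ^ j * x ^ (j + 1) := ih
    _ = a ^ j * ((a * x ^ 2) * x ^ j) := by rw [h.2.1, ← pow_succ']
    _ = a ^ (j + 1) * x ^ (j + 2) := by
        rw [mul_assoc a (x ^ 2) (x ^ j), ← pow_add, Nat.add_comm 2 j, ← mul_assoc,
          ← pow_succ]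

/-- a*x = a^(j+1) * x^(j+1) -/
lemma pc_ax_eq (h : PCoreEqs a x m) (j : ℕ) : a * x = a ^ (j + 1) * x ^ (j + 1) := by
  calc a * x = a * (a ^ j * x ^ (j + 1)) := by rw [← pc_x_eq h j]
  _ = a ^ (j + 1) * x ^ (j + 1) := by rw [← mul_assoc, ← pow_succ']

lemma pc_xa_pow' (h : PCoreEqs a x m) (t : ℕ) : x * a ^ (m + t + 1) = a ^ (m + t) := by
  induction t with
  | zero => simpa using h.1
  | succ t ih =>
    have e : m + (t + 1) + 1 = (m + t + 1) + 1 := by ring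
    rw [e, pow_succ a (m + t + 1), ← mul_assoc, ih, ← pow_succ]
    ring_nf

/-- x * a^(j+1) = a^j for j ≥ m -/
lemma pc_xa_pow (h : PCoreEqs a x m) (j : ℕ) (hj : m ≤ j) : x * a ^ (j + 1) = a ^ j := by
  obtain ⟨t, rfl⟩ := Nat.exists_eq_add_of_le hj
  exact pc_xa_pow' h t

/-- a*x*a^j = a^j for j ≥ m -/
lemma pc_axa_pow (h : PCoreEqs a x m) (j : ℕ) (hj : m ≤ j) : a * x * a ^ j = a ^ j := by
  calc a * x * a ^ j = a * x * (x * a ^ (j + 1)) := by rw [pc_xa_pow h j hj]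
  _ = (a * x ^ 2) * a ^ (j + 1) := by noncomm_ring
  _ = a ^ j := by rw [h.2.1, pc_xa_pow h j hj]

lemma pc_xax (h : PCoreEqs a x m) : x * a * x = x := by
  calc x * a * x = x * (a ^ (m + 1) * x ^ (m + 1)) := by
        rw [← pc_ax_eq h m, mul_assoc]
  _ = (x * a ^ (m + 1)) * x ^ (m + 1) := by rw [mul_assoc]
  _ = a ^ m * x ^ (m + 1) := by rw [h.1]
  _ = x := (pc_x_eq h m).symm

/-- x * a^2 * x = a * x -/
lemma pc_xaax (h : PCoreEqs a x m) : x * a ^ 2 * x = a * x := by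
  calc x * a ^ 2 * x = x * a ^ 2 * (a ^ m * x ^ (m + 1)) := by rw [← pc_x_eq h m]
  _ = (x * a ^ (m + 2)) * x ^ (m + 1) := by
        rw [← mul_assoc, mul_assoc x (a ^ 2) (a ^ m), ← pow_add, Nat.add_comm 2 m]
  _ = a ^ (m + 1) * x ^ (m + 1) := by rw [pc_xa_pow h (m + 1) (Nat.le_succ m)]
  _ = a * x := (pc_ax_eq h m).symm

/-- x * (a*x*a) = x * a -/
lemma pc_x_axa (h : PCoreEqs a x m) : x * (a * x * a) = x * a := by
  rw [← mul_assoc, ← mul_assoc, pc_xax h]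

/-- (a*x*a) * x = a * x -/
lemma pc_axa_x (h : PCoreEqs a x m) : (a * x * a) * x = a * x := by
  rw [mul_assoc, mul_assoc, ← mul_assoc x a x, pc_xax h]

/-- a*x*a is core invertible with core inverse x. -/
lemma pc_core (h : PCoreEqs a x m) : IsCoreInv (a * x * a) x := by
  refine ⟨?_, ?_, ?_⟩
  · calc x * (a * x * a) ^ 2 = (x * (a * x * a)) * (a * x * a) := by rw [sq, ← mul_assoc]
    _ = (x * a) * (a * x * a) := by rw [pc_x_axa h]
    _ = (x * a ^ 2 * x) * a := by noncomm_ring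
    _ = a * x * a := by rw [pc_xaax h]
  · calc (a * x * a) * x ^ 2 = a * x * (a * x ^ 2) := by noncomm_ring
    _ = a * x * x := by rw [h.2.1]
    _ = a * x ^ 2 := by rw [mul_assoc, ← sq]
    _ = x := h.2.1
  · rw [pc_axa_x h]; exact h.2.2

/-- Uniqueness of the core inverse. -/
lemma core_unique {c u v : R} (hu : IsCoreInv c u) (hv : IsCoreInv c v) : u = v := by
  have hu' : PCoreEqs c u 1 := ⟨by simpa using hu.1, hu.2.1, hu.2.2⟩
  have hv' : PCoreEqs c v 1 := ⟨by simpa using hv.1, hv.2.1, hv.2.2⟩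
  have cucc : c * u * c ^ 2 = c ^ 2 := pc_axa_pow hu' 2 (by norm_num)
  have cvcc : c * v * c ^ 2 = c ^ 2 := pc_axa_pow hv' 2 (by norm_num)
  have h1 : c * v = c * u * (c * v) := by
    calc c * v = c ^ 2 * v ^ 2 := pc_ax_eq hv' 1
    _ = (c * u * c ^ 2) * v ^ 2 := by rw [cucc]
    _ = c * u * (c ^ 2 * v ^ 2) := by rw [mul_assoc]
    _ = c * u * (c * v) := by rw [← pc_ax_eq hv' 1]
  have h2 : c * u = c * v * (c * u) := by
    calc c * u = c ^ 2 * u ^ 2 := pc_ax_eq hu' 1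
    _ = (c * v * c ^ 2) * u ^ 2 := by rw [cvcc]
    _ = c * v * (c ^ 2 * u ^ 2) := by rw [mul_assoc]
    _ = c * v * (c * u) := by rw [← pc_ax_eq hu' 1]
  have h3 : c * u = c * u * (c * v) := by
    have := congrArg star h2
    rwa [hu.2.2, star_mul, hu.2.2, hv.2.2] at this
  have hcu : c * u = c * v := h3.trans h1.symm
  calc u = u * c * u := (pc_xax hu').symm
  _ = u * (c * v) := by rw [mul_assoc, hcu]
  _ = u * (c * (c * v ^ 2)) := by rw [hv.2.1]
  _ = u * c ^ 2 * v ^ 2 := by noncomm_ring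
  _ = c * v ^ 2 := by rw [hu.1]
  _ = v := hv.2.1

end Aux

/-- Theorem 4.3: characterizations of the pseudo core order. Here `x`, `y` are the
pseudo core inverses of `a`, `b` with indices `m = I(a)`, `n = I(b)`, and
`k = max m n`. -/
theorem stmt_15 [Ring R] [StarRing R] (a b x y : R) (m n : ℕ)
    (ha : IsPCoreWithIndex a x m) (hb : IsPCoreWithIndex b y n) :
    List.TFAE
      [ x * a = x * b ∧ a * x = b * x,
        a ^ (max m n + 1) = b * a ^ (max m n) ∧
          star a * a ^ (max m n) = star b * a ^ (max m n),
        CoreLE (a * x * a) (b * y * b) ] := by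
  obtain ⟨hm, hx, -⟩ := ha
  obtain ⟨hn, hy, -⟩ := hb
  set k := max m n with hk
  have hkm : m ≤ k := le_max_left m n
  have hkn : n ≤ k := le_max_right m n
  have hk0 : 0 < k := lt_of_lt_of_le hm hkm
  tfae_have 1 → 2 := by
    rintro ⟨h1, h2⟩
    have g1 : b * a ^ k = a ^ (k + 1) := by
      calc b * a ^ k = b * (x * a ^ (k + 1)) := by rw [pc_xa_pow hx k hkm]
      _ = b * x * a ^ (k + 1) := by rw [mul_assoc]
      _ = a * x * a ^ (k + 1) := by rw [← h2]
      _ = a ^ (k + 1) := pc_axa_pow hx (k + 1) (le_trans hkm (Nat.le_succ k))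
    have s1 : star (a ^ k) * (a * x) = star (a ^ k) := by
      conv_lhs => rw [← hx.2.2]
      rw [← star_mul, pc_axa_pow hx k hkm]
    have s2 : a * x * b = a * x * a := by
      calc a * x * b = a * (x * b) := mul_assoc _ _ _
      _ = a * (x * a) := by rw [← h1]
      _ = a * x * a := (mul_assoc _ _ _).symm
    have s3 : star (a ^ k) * b = star (a ^ k) * a := by
      calc star (a ^ k) * b = star (a ^ k) * (a * x) * b := by rw [s1]
      _ = star (a ^ k) * (a * x * b) := by rw [mul_assoc]
      _ = star (a ^ k) * (a * x * a) := by rw [s2]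
      _ = star (a ^ k) * (a * x) * a := by rw [← mul_assoc]
      _ = star (a ^ k) * a := by rw [s1]
    constructor
    · exact g1.symm
    · have := congrArg star s3
      rw [star_mul, star_mul, star_star] at this
      exact this.symm
  tfae_have 2 → 3 := by
    rintro ⟨hA1, hA2⟩
    have S1 : ∀ j : ℕ, a ^ (k + j) = b ^ j * a ^ k := by
      intro j
      induction j with
      | zero => simp
      | succ j ih =>
        calc a ^ (k + (j + 1)) = a ^ (k + j) * a := by rw [show k + (j+1) = (k+j)+1 from rfl, pow_succ]
        _ = b ^ j * a ^ k * a := by rw [ih]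
        _ = b ^ j * a ^ (k + 1) := by rw [mul_assoc, ← pow_succ]
        _ = b ^ j * (b * a ^ k) := by rw [hA1]
        _ = b ^ (j + 1) * a ^ k := by rw [← mul_assoc, ← pow_succ]
    have S2 : a * x = b * x := by
      calc a * x = a ^ (k + 1) * x ^ (k + 1) := pc_ax_eq hx k
      _ = b * a ^ k * x ^ (k + 1) := by rw [hA1]
      _ = b * (a ^ k * x ^ (k + 1)) := mul_assoc _ _ _
      _ = b * x := by rw [← pc_x_eq hx k]
    have S3 : b * y * a ^ (k + k) = a ^ (k + k) := by
      calc b * y * a ^ (k + k) = b * y * (b ^ k * a ^ k) := by rw [S1 k]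
      _ = (b * y * b ^ k) * a ^ k := (mul_assoc _ _ _).symm
      _ = b ^ k * a ^ k := by rw [pc_axa_pow hy k hkn]
      _ = a ^ (k + k) := (S1 k).symm
    obtain ⟨s, hs⟩ : ∃ s, k = s + 1 := ⟨k - 1, (Nat.succ_pred_eq_of_pos hk0).symm⟩
    have haxkk : a * x = a ^ (k + k) * x ^ (k + k) := by
      have h := pc_ax_eq hx (k + s)
      rw [show k + s + 1 = k + k by omega] at h
      exact h
    have hbx : (b * y * b) * x = a * x := by
      calc (b * y * b) * x = b * y * (b * x) := by rw [mul_assoc]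
      _ = b * y * (a * x) := by rw [← S2]
      _ = b * y * (a ^ (k + k) * x ^ (k + k)) := by rw [haxkk]
      _ = (b * y * a ^ (k + k)) * x ^ (k + k) := by rw [← mul_assoc]
      _ = a ^ (k + k) * x ^ (k + k) := by rw [S3]
      _ = a * x := haxkk.symm
    have hstar : star (a ^ k) * a = star (a ^ k) * b := by
      have := congrArg star hA2
      rwa [star_mul, star_mul, star_star, star_star] at this
    have S5 : star (a ^ (k + k)) * b = star (a ^ (k + k)) * a := by
      calc star (a ^ (k + k)) * b = star (a ^ k) * (star (a ^ k) * b) := by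
            rw [pow_add, star_mul, mul_assoc]
      _ = star (a ^ k) * (star (a ^ k) * a) := by rw [← hstar]
      _ = star (a ^ (k + k)) * a := by rw [pow_add, star_mul, mul_assoc]
    have S6 : star (a ^ (k + k)) * (b * y) = star (a ^ (k + k)) := by
      conv_lhs => rw [← hy.2.2]
      rw [← star_mul, S3]
    have S6b : star (a ^ (k + k)) * (b * y * b) = star (a ^ (k + k)) * a := by
      calc star (a ^ (k + k)) * (b * y * b) = (star (a ^ (k + k)) * (b * y)) * b := by
            rw [← mul_assoc]
      _ = star (a ^ (k + k)) * b := by rw [S6]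
      _ = star (a ^ (k + k)) * a := S5
    have hx7 : x * (a * x) = x := by rw [← mul_assoc]; exact pc_xax hx
    have S8 : x * (b * y * b) = x * a := by
      calc x * (b * y * b) = x * (a * x) * (b * y * b) := by rw [hx7]
      _ = x * (star (x ^ (k + k)) * (star (a ^ (k + k)) * (b * y * b))) := by
          rw [← hx.2.2, haxkk, star_mul, mul_assoc, mul_assoc]
      _ = x * (star (x ^ (k + k)) * (star (a ^ (k + k)) * a)) := by rw [S6b]
      _ = x * (star (x ^ (k + k)) * star (a ^ (k + k))) * a := by
          rw [← mul_assoc, ← mul_assoc, mul_assoc x]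
      _ = x * star (a ^ (k + k) * x ^ (k + k)) * a := by rw [star_mul]
      _ = x * (a * x) * a := by rw [← haxkk, hx.2.2]
      _ = x * a := by rw [hx7]
    refine ⟨x, pc_core hx, ?_, ?_⟩
    · rw [pc_x_axa hx, S8]
    · rw [pc_axa_x hx, hbx]
  tfae_have 3 → 1 := by
    rintro ⟨u, hu, hu1, hu2⟩
    have hux : u = x := core_unique hu (pc_core hx)
    rw [hux] at hu1 hu2
    rw [pc_x_axa hx] at hu1
    rw [pc_axa_x hx] at hu2
    -- hu1 : x * a = x * (b*y*b), hu2 : a * x = (b*y*b) * x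
    have T1 : x = b * y * b * x ^ 2 := by
      calc x = a * x ^ 2 := (hx.2.1).symm
      _ = (a * x) * x := by rw [sq, ← mul_assoc]
      _ = ((b * y * b) * x) * x := by rw [hu2]
      _ = b * y * b * x ^ 2 := by rw [mul_assoc, ← sq]
    have T2 : b * y * x = x := by
      have e := congrArg (fun t => b * y * t) T1
      calc b * y * x = b * y * (b * y * b * x ^ 2) := e
      _ = b * (y * b * y) * b * x ^ 2 := by noncomm_ring
      _ = b * y * b * x ^ 2 := by rw [pc_xax hy]
      _ = x := T1.symm
    obtain ⟨s, hs⟩ : ∃ s, n = s + 1 := ⟨n - 1, (Nat.succ_pred_eq_of_pos hn).symm⟩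
    have hyeq : y = b ^ s * y ^ (s + 1) := pc_x_eq hy s
    have T3 : x = b ^ (s + 1) * (y ^ (s + 1) * x) := by
      calc x = b * (y * x) := by rw [← mul_assoc, T2]
      _ = b * (b ^ s * y ^ (s + 1) * x) := by rw [← hyeq]
      _ = b ^ (s + 1) * (y ^ (s + 1) * x) := by
          rw [mul_assoc (b ^ s), ← mul_assoc b, ← pow_succ']
    have hyb : y * b ^ (s + 1 + 1) = b ^ (s + 1) := by
      have := hy.1; rwa [hs] at this
    have T4 : b * x = a * x := by
      have e2 : (b * y * b) * x = b * (y * b ^ (s + 1 + 1)) * (y ^ (s + 1) * x) := by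
        conv_lhs => rw [T3]
        calc (b * y * b) * (b ^ (s + 1) * (y ^ (s + 1) * x))
            = b * (y * (b * b ^ (s + 1))) * (y ^ (s + 1) * x) := by noncomm_ring
        _ = b * (y * b ^ (s + 1 + 1)) * (y ^ (s + 1) * x) := by rw [← pow_succ']
      rw [hyb] at e2
      calc b * x = b * (b ^ (s + 1) * (y ^ (s + 1) * x)) := by rw [← T3]
      _ = b * b ^ (s + 1) * (y ^ (s + 1) * x) := by rw [← mul_assoc]
      _ = (b * y * b) * x := e2.symm
      _ = a * x := hu2.symm
    have T5 : b * y * (a * x) = a * x := by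
      calc b * y * (a * x) = b * y * ((b * y * b) * x) := by rw [hu2]
      _ = b * (y * b * y) * (b * x) := by noncomm_ring
      _ = b * y * (b * x) := by rw [pc_xax hy]
      _ = (b * y * b) * x := by rw [← mul_assoc]
      _ = a * x := hu2.symm
    have T5s : (a * x) * (b * y) = a * x := by
      have := congrArg star T5
      rwa [star_mul, hx.2.2, hy.2.2] at this
    have T6 : a * x * b = a * x * a := by
      have e3 : a * x * (b * y * b) = a * x * b := by
        calc a * x * (b * y * b) = (a * x * (b * y)) * b := by rw [← mul_assoc]
        _ = a * x * b := by rw [T5s]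
      have e4 : a * x * a = a * x * (b * y * b) := by
        calc a * x * a = a * (x * a) := mul_assoc _ _ _
        _ = a * (x * (b * y * b)) := by rw [hu1]
        _ = a * x * (b * y * b) := (mul_assoc _ _ _).symm
      exact (e4.trans e3).symm
    have T7 : x * a = x * b := by
      have : x * b = x * a := by
        calc x * b = (x * a * x) * b := by rw [pc_xax hx]
        _ = x * (a * x * b) := by noncomm_ring
        _ = x * (a * x * a) := by rw [T6]
        _ = x * a := pc_x_axa hx
      exact this.symm
    exact ⟨T7, T4.symm⟩
  tfae_finish
end

section
/- Let R be a unital *-ring and let a, b ∈ R be pseudo core invertible with a ≤Ⓓ b. Suppose a is *-DMP. Then b is *-DMP if and only if b(1 − a a^Ⓓ) is *-DMP. -/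
variable {R : Type*}

section aux
variable [Ring R]

private theorem mulc {x y z : R} (h : x * y = z) (t : R) : x * (y * t) = z * t := by
  rw [← mul_assoc, h]

/-- The group inverse lies in the double commutant. -/
theorem aux_comm (B G u : R) (h1 : B * G * B = B) (h2 : G * B * G = G)
    (h3 : B * G = G * B) (h : u * B = B * u) : u * G = G * u := by
  have hBBG : B * (B * G) = B := by rw [h3, ← mul_assoc, h1]
  have e1 : B * G * u * (B * G) = u * (B * G) := by
    calc B * G * u * (B * G) = B * G * (u * (B * G)) := by rw [mul_assoc (B*G) u (B*G)]
      _ = B * G * (u * B * G) := by rw [← mul_assoc u B G]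
      _ = B * G * (B * u * G) := by rw [h]
      _ = B * G * (B * (u * G)) := by rw [mul_assoc B u G]
      _ = B * G * B * (u * G) := by rw [← mul_assoc (B*G) B (u*G)]
      _ = B * (u * G) := by rw [h1]
      _ = B * u * G := by rw [← mul_assoc]
      _ = u * B * G := by rw [← h]
      _ = u * (B * G) := by rw [mul_assoc]
  have e2 : B * G * u * (B * G) = B * G * u := by
    calc B * G * u * (B * G) = G * B * u * (B * G) := by rw [h3]
      _ = G * (B * u) * (B * G) := by rw [mul_assoc G B u]
      _ = G * (u * B) * (B * G) := by rw [← h]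
      _ = G * u * B * (B * G) := by rw [← mul_assoc G u B]
      _ = G * u * (B * (B * G)) := by rw [mul_assoc (G*u) B (B*G)]
      _ = G * u * B := by rw [hBBG]
      _ = G * (u * B) := by rw [mul_assoc]
      _ = G * (B * u) := by rw [h]
      _ = G * B * u := by rw [← mul_assoc]
      _ = B * G * u := by rw [← h3]
  have hq : u * (B * G) = B * G * u := e1.symm.trans e2
  have hGq : G * (B * G) = G := by rw [← mul_assoc, h2]
  have hqG : B * G * G = G := by rw [h3, h2]
  have key : G * u = u * G := by
    calc G * u = G * (B * G) * u := by rw [hGq]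
      _ = G * (B * G * u) := by rw [mul_assoc]
      _ = G * (u * (B * G)) := by rw [← hq]
      _ = G * (u * B * G) := by rw [← mul_assoc u B G]
      _ = G * (B * u * G) := by rw [h]
      _ = G * (B * u) * G := by rw [← mul_assoc G (B*u) G]
      _ = G * B * u * G := by rw [← mul_assoc G B u]
      _ = B * G * u * G := by rw [← h3]
      _ = u * (B * G) * G := by rw [← hq]
      _ = u * (B * G * G) := by rw [mul_assoc]
      _ = u * G := by rw [hqG]
  exact key.symm

theorem pcore_chain {a x : R} (h : a * x ^ 2 = x) : ∀ j, x = a ^ j * x ^ (j + 1) := by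
  intro j
  induction j with
  | zero => simp
  | succ j ih =>
    have hstep : x ^ (j + 1) = a * x ^ (j + 2) := by
      have : x ^ (j + 2) = x ^ 2 * x ^ j := by
        rw [show j + 2 = 2 + j from Nat.add_comm j 2, pow_add]
      rw [this, ← mul_assoc, h, ← pow_succ']
    calc x = a ^ j * x ^ (j + 1) := ih
      _ = a ^ j * (a * x ^ (j + 2)) := by rw [← hstep]
      _ = a ^ j * a * x ^ (j + 2) := by rw [← mul_assoc]
      _ = a ^ (j + 1) * x ^ (j + 2) := by rw [← pow_succ]

theorem pcore_outer {a x : R} {m : ℕ} (h1 : x * a ^ (m + 1) = a ^ m)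
    (h2 : a * x ^ 2 = x) : x * a * x = x := by
  have hc := pcore_chain h2 m
  calc x * a * x = x * a * (a ^ m * x ^ (m + 1)) := congrArg (fun t => x * a * t) hc
    _ = x * (a * a ^ m) * x ^ (m + 1) := by simp only [mul_assoc]
    _ = x * a ^ (m + 1) * x ^ (m + 1) := by rw [← pow_succ']
    _ = a ^ m * x ^ (m + 1) := by rw [h1]
    _ = x := hc.symm
end aux

section aux2
variable [Ring R] [StarRing R]

theorem pcore_lift {a x : R} {m : ℕ} (h : PCoreEqs a x m) :
    ∀ k, m ≤ k → PCoreEqs a x k := by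
  have key : ∀ i, PCoreEqs a x (m + i) := by
    intro i
    induction i with
    | zero => exact h
    | succ i ih =>
      refine ⟨?_, h.2.1, h.2.2⟩
      calc x * a ^ (m + (i + 1) + 1) = x * (a ^ (m + i + 1) * a) := by
            rw [show m + (i + 1) + 1 = m + i + 1 + 1 from by omega, pow_succ]
        _ = x * a ^ (m + i + 1) * a := by rw [← mul_assoc]
        _ = a ^ (m + i) * a := by rw [ih.1]
        _ = a ^ (m + (i + 1)) := by rw [← pow_succ, Nat.add_assoc]
  intro k hk
  obtain ⟨i, rfl⟩ := Nat.exists_eq_add_of_le hk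
  exact key i

theorem pcore_unique {a x y : R} {k : ℕ} (hx : PCoreEqs a x k)
    (hy : PCoreEqs a y k) : x = y := by
  have hcx := pcore_chain hx.2.1
  have hcy := pcore_chain hy.2.1
  have hxy : x * a * y = y := by
    calc x * a * y = x * a * (a ^ k * y ^ (k + 1)) := congrArg (fun t => x * a * t) (hcy k)
      _ = x * (a * a ^ k) * y ^ (k + 1) := by simp only [mul_assoc]
      _ = x * a ^ (k + 1) * y ^ (k + 1) := by rw [← pow_succ']
      _ = a ^ k * y ^ (k + 1) := by rw [hx.1]
      _ = y := (hcy k).symm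
  have hyx : y * a * x = x := by
    calc y * a * x = y * a * (a ^ k * x ^ (k + 1)) := congrArg (fun t => y * a * t) (hcx k)
      _ = y * (a * a ^ k) * x ^ (k + 1) := by simp only [mul_assoc]
      _ = y * a ^ (k + 1) * x ^ (k + 1) := by rw [← pow_succ']
      _ = a ^ k * x ^ (k + 1) := by rw [hy.1]
      _ = x := (hcx k).symm
  have h5 : a * x = a * y * (a * x) := by
    calc a * x = a * (y * a * x) := congrArg (fun t => a * t) hyx.symm
      _ = a * y * (a * x) := by simp only [mul_assoc]
  have haxy : a * x = a * y := by
    calc a * x = star (a * x) := hx.2.2.symm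
      _ = star (a * y * (a * x)) := by rw [← h5]
      _ = star (a * x) * star (a * y) := by rw [star_mul]
      _ = a * x * (a * y) := by rw [hx.2.2, hy.2.2]
      _ = a * (x * a * y) := by simp only [mul_assoc]
      _ = a * y := by rw [hxy]
  calc x = x * a * x := (pcore_outer hx.1 hx.2.1).symm
    _ = x * (a * y) := by rw [mul_assoc, haxy]
    _ = y := by rw [← mul_assoc, hxy]

end aux2

section aux3
variable [Ring R] [StarRing R]

theorem pcore_comm (a p : R) (hp : IsPCore a p) (hDMP : IsStarDMP a) :
    a * p = p * a := by
  obtain ⟨m, hm, hpm⟩ := hp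
  obtain ⟨n, hn, x, ⟨hg1, hg2, hg3⟩, hmp⟩ := hDMP
  obtain ⟨k, rfl⟩ : ∃ k, n = k + 1 := ⟨n - 1, (Nat.succ_pred_eq_of_pos hn).symm⟩
  have hax : a * x = x * a :=
    aux_comm (a ^ (k + 1)) x a hg1 hg2 hg3 (by rw [← pow_succ', pow_succ])
  have hxaC : Commute x a := hax.symm
  have hxaP : ∀ i : ℕ, x * a ^ i = a ^ i * x := fun i => (hxaC.pow_right i)
  have hax2 : a ^ (k + 1) * (x * x) = x := by
    calc a ^ (k + 1) * (x * x) = a ^ (k + 1) * x * x := by rw [← mul_assoc]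
      _ = x * a ^ (k + 1) * x := by rw [← hxaP]
      _ = x := hg2
  have d1 : (a ^ k * x) * a ^ (k + 1 + 1) = a ^ (k + 1) := by
    calc (a ^ k * x) * a ^ (k + 1 + 1) = a ^ k * (x * a ^ (k + 1 + 1)) := by rw [mul_assoc]
      _ = a ^ k * (a ^ (k + 1 + 1) * x) := by rw [hxaP]
      _ = a ^ k * a ^ (k + 1 + 1) * x := by rw [← mul_assoc]
      _ = a ^ (k + 1) * a ^ (k + 1) * x := by
            rw [← pow_add, ← pow_add, show k + (k + 1 + 1) = k + 1 + (k + 1) from by omega]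
      _ = a ^ (k + 1) * (a ^ (k + 1) * x) := by rw [mul_assoc]
      _ = a ^ (k + 1) * (x * a ^ (k + 1)) := by rw [hxaP]
      _ = a ^ (k + 1) * x * a ^ (k + 1) := by rw [← mul_assoc]
      _ = a ^ (k + 1) := hg1
  have d2 : a * (a ^ k * x) ^ 2 = a ^ k * x := by
    calc a * (a ^ k * x) ^ 2 = a * (a ^ k * x * (a ^ k * x)) := by rw [sq]
      _ = a * (a ^ k * (x * (a ^ k * x))) := by rw [mul_assoc (a ^ k) x (a ^ k * x)]
      _ = a * (a ^ k * (x * a ^ k * x)) := by rw [← mul_assoc x (a ^ k) x]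
      _ = a * (a ^ k * (a ^ k * x * x)) := by rw [hxaP]
      _ = a * a ^ k * (a ^ k * (x * x)) := by simp only [mul_assoc]
      _ = a ^ k * a * (a ^ k * (x * x)) := by rw [((Commute.refl a).pow_left k).eq]
      _ = a ^ k * (a * a ^ k * (x * x)) := by simp only [mul_assoc]
      _ = a ^ k * (a ^ (k + 1) * (x * x)) := by rw [← pow_succ']
      _ = a ^ k * x := by rw [hax2]
  have d3 : star (a * (a ^ k * x)) = a * (a ^ k * x) := by
    have e : a * (a ^ k * x) = a ^ (k + 1) * x := by rw [← mul_assoc, ← pow_succ']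
    rw [e]; exact hmp.2.2.1
  have hd : PCoreEqs a (a ^ k * x) (k + 1) := ⟨d1, d2, d3⟩
  set K := max m (k + 1) with hK
  have hpK := pcore_lift hpm K (le_max_left _ _)
  have hdK := pcore_lift hd K (le_max_right _ _)
  have hpd : p = a ^ k * x := pcore_unique hpK hdK
  rw [hpd]
  calc a * (a ^ k * x) = a * a ^ k * x := by rw [← mul_assoc]
    _ = a ^ (k + 1) * x := by rw [← pow_succ']
    _ = a ^ k * a * x := by rw [pow_succ]
    _ = a ^ k * (a * x) := by rw [mul_assoc]
    _ = a ^ k * (x * a) := by rw [hax]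
    _ = a ^ k * x * a := by rw [← mul_assoc]

end aux3

section aux4
variable [Ring R] [StarRing R]

theorem to_corner (b e : R) (he2 : e * e = e) (hestar : star e = e)
    (hcom : e * b = b * e) (h : IsStarDMP b) : IsStarDMP (b * (1 - e)) := by
  obtain ⟨n, hn, x, ⟨hg1, hg2, hg3⟩, ⟨hm1, hm2, hm3, hm4⟩⟩ := h
  obtain ⟨j, rfl⟩ : ∃ j, n = j + 1 := ⟨n - 1, (Nat.succ_pred_eq_of_pos hn).symm⟩
  have hcomN : e * b ^ (j + 1) = b ^ (j + 1) * e := (Commute.pow_right hcom (j + 1)).eq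
  have hex : e * x = x * e := aux_comm (b ^ (j + 1)) x e hg1 hg2 hg3 hcomN
  set f := 1 - e with hf
  have hff : f * f = f := by
    rw [hf, sub_mul, one_mul, mul_sub, mul_one, he2, sub_self, sub_zero]
  have hfstar : star f = f := by rw [hf, star_sub, star_one, hestar]
  have hfx : f * x = x * f := by
    rw [hf, sub_mul, one_mul, mul_sub, mul_one, hex]
  have hfB : f * b ^ (j + 1) = b ^ (j + 1) * f := by
    rw [hf, sub_mul, one_mul, mul_sub, mul_one, hcomN]
  have hfpow : ∀ i : ℕ, f ^ (i + 1) = f := by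
    intro i; induction i with
    | zero => simp
    | succ i ih => rw [pow_succ, ih, hff]
  have hcn : (b * f) ^ (j + 1) = b ^ (j + 1) * f := by
    have hbf : Commute b f := by
      have : f * b = b * f := by rw [hf, sub_mul, one_mul, mul_sub, mul_one, hcom]
      exact this.symm
    rw [hbf.mul_pow, hfpow]
  set B := b ^ (j + 1) with hB
  have hfBf : f * (B * f) = B * f := by rw [← mul_assoc, hfB, mul_assoc, hff]
  have hfxf : f * (x * f) = x * f := by rw [← mul_assoc, hfx, mul_assoc, hff]
  have hcy : B * f * (x * f) = B * x * f := by
    calc B * f * (x * f) = B * (f * (x * f)) := by rw [mul_assoc]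
      _ = B * (x * f) := by rw [hfxf]
      _ = B * x * f := by rw [← mul_assoc]
  have hyc : x * f * (B * f) = x * B * f := by
    calc x * f * (B * f) = x * (f * (B * f)) := by rw [mul_assoc]
      _ = x * (B * f) := by rw [hfBf]
      _ = x * B * f := by rw [← mul_assoc]
  refine ⟨j + 1, Nat.succ_pos j, x * f, ⟨?_, ?_, ?_⟩, ⟨?_, ?_, ?_, ?_⟩⟩
  · -- (b*f)^n * (x*f) * (b*f)^n = (b*f)^n
    rw [hcn, hcy]
    calc B * x * f * (B * f) = B * x * (f * (B * f)) := by rw [mul_assoc]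
      _ = B * x * (B * f) := by rw [hfBf]
      _ = B * x * B * f := by rw [← mul_assoc]
      _ = B * f := by rw [hg1]
  · rw [hcn, hyc]
    calc x * B * f * (x * f) = x * B * (f * (x * f)) := by rw [mul_assoc]
      _ = x * B * (x * f) := by rw [hfxf]
      _ = x * B * x * f := by rw [← mul_assoc]
      _ = x * f := by rw [hg2]
  · rw [hcn, hcy, hyc, hg3]
  · rw [hcn, hcy]
    calc B * x * f * (B * f) = B * x * (f * (B * f)) := by rw [mul_assoc]
      _ = B * x * (B * f) := by rw [hfBf]
      _ = B * x * B * f := by rw [← mul_assoc]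
      _ = B * f := by rw [hg1]
  · rw [hcn, hyc]
    calc x * B * f * (x * f) = x * B * (f * (x * f)) := by rw [mul_assoc]
      _ = x * B * (x * f) := by rw [hfxf]
      _ = x * B * x * f := by rw [← mul_assoc]
      _ = x * f := by rw [hg2]
  · rw [hcn, hcy]
    calc star (B * x * f) = star f * star (B * x) := by rw [star_mul]
      _ = f * (B * x) := by rw [hfstar, hm3]
      _ = f * B * x := by rw [← mul_assoc]
      _ = B * f * x := by rw [hfB]
      _ = B * (f * x) := by rw [mul_assoc]
      _ = B * (x * f) := by rw [hfx]
      _ = B * x * f := by rw [← mul_assoc]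
  · rw [hcn, hyc]
    calc star (x * B * f) = star f * star (x * B) := by rw [star_mul]
      _ = f * (x * B) := by rw [hfstar, hm4]
      _ = f * x * B := by rw [← mul_assoc]
      _ = x * f * B := by rw [hfx]
      _ = x * (f * B) := by rw [mul_assoc]
      _ = x * (B * f) := by rw [hfB]
      _ = x * B * f := by rw [← mul_assoc]

end aux4

section aux5
variable [Ring R] [StarRing R]

theorem of_corner (b s c p e : R)
    (hb : b = s + c) (hsp : s * p = e) (hps : p * s = e)
    (hse : s * e = s) (hes : e * s = s) (hep : e * p = p) (hpe : p * e = p)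
    (hec : e * c = 0) (hce : c * e = 0) (hsc : s * c = 0) (hcs : c * s = 0)
    (hestar : star e = e) (h : IsStarDMP c) : IsStarDMP b := by
  obtain ⟨n, hn, y, ⟨hg1, hg2, hg3⟩, ⟨hm1, hm2, hm3, hm4⟩⟩ := h
  obtain ⟨j, rfl⟩ : ∃ j, n = j + 1 := ⟨n - 1, (Nat.succ_pred_eq_of_pos hn).symm⟩
  have P1 : ∀ i : ℕ, s ^ (i + 1) * p ^ (i + 1) = e := by
    intro i; induction i with
    | zero => simpa using hsp
    | succ i ih =>
      calc s ^ (i + 1 + 1) * p ^ (i + 1 + 1)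
          = s * s ^ (i + 1) * (p ^ (i + 1) * p) := by rw [pow_succ' s, pow_succ p]
        _ = s * (s ^ (i + 1) * p ^ (i + 1) * p) := by simp only [mul_assoc]
        _ = s * (e * p) := by rw [ih]
        _ = s * p := by rw [hep]
        _ = e := hsp
  have P2 : ∀ i : ℕ, p ^ (i + 1) * s ^ (i + 1) = e := by
    intro i; induction i with
    | zero => simpa using hps
    | succ i ih =>
      calc p ^ (i + 1 + 1) * s ^ (i + 1 + 1)
          = p * p ^ (i + 1) * (s ^ (i + 1) * s) := by rw [pow_succ' p, pow_succ s]
        _ = p * (p ^ (i + 1) * s ^ (i + 1) * s) := by simp only [mul_assoc]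
        _ = p * (e * s) := by rw [ih]
        _ = p * s := by rw [hes]
        _ = e := hps
  have P3 : ∀ i : ℕ, e * s ^ (i + 1) = s ^ (i + 1) := fun i => by
    rw [pow_succ' s, ← mul_assoc, hes]
  have P4 : ∀ i : ℕ, s ^ (i + 1) * e = s ^ (i + 1) := fun i => by
    rw [pow_succ s, mul_assoc, hse]
  have P5 : ∀ i : ℕ, e * p ^ (i + 1) = p ^ (i + 1) := fun i => by
    rw [pow_succ' p, ← mul_assoc, hep]
  have P6 : ∀ i : ℕ, p ^ (i + 1) * e = p ^ (i + 1) := fun i => by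
    rw [pow_succ p, mul_assoc, hpe]
  have P7 : ∀ i : ℕ, e * c ^ (i + 1) = 0 := fun i => by
    rw [pow_succ' c, ← mul_assoc, hec, zero_mul]
  have P8 : ∀ i : ℕ, c ^ (i + 1) * e = 0 := fun i => by
    rw [pow_succ c, mul_assoc, hce, mul_zero]
  have P9 : ∀ i : ℕ, b ^ (i + 1) = s ^ (i + 1) + c ^ (i + 1) := by
    intro i; induction i with
    | zero => simpa using hb
    | succ i ih =>
      calc b ^ (i + 1 + 1) = b ^ (i + 1) * b := pow_succ b (i + 1)
        _ = (s ^ (i + 1) + c ^ (i + 1)) * (s + c) := by rw [ih, hb]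
        _ = s ^ (i + 1) * s + s ^ (i + 1) * c + (c ^ (i + 1) * s + c ^ (i + 1) * c) := by
              rw [add_mul, mul_add, mul_add]
        _ = s ^ (i + 1 + 1) + c ^ (i + 1 + 1) := by
              have h1 : s ^ (i + 1) * c = 0 := by rw [pow_succ s, mul_assoc, hsc, mul_zero]
              have h2 : c ^ (i + 1) * s = 0 := by rw [pow_succ c, mul_assoc, hcs, mul_zero]
              rw [h1, h2, add_zero, zero_add, ← pow_succ, ← pow_succ]
  set N := j + 1 with hN
  have hy2 : c ^ N * (y * y) = y := by rw [← mul_assoc, hg3, hg2]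
  have hy2' : y * y * c ^ N = y := by rw [mul_assoc, ← hg3, ← mul_assoc, hg2]
  have hey : e * y = 0 := by rw [← hy2, ← mul_assoc, P7, zero_mul]
  have hye : y * e = 0 := by rw [← hy2', mul_assoc, P8, mul_zero]
  have hsy : s ^ N * y = 0 := by rw [← P4, mul_assoc, hey, mul_zero]
  have hys : y * s ^ N = 0 := by rw [← P3, ← mul_assoc, hye, zero_mul]
  have hpc : p ^ N * c ^ N = 0 := by rw [← P6, mul_assoc, P7, mul_zero]
  have hcp : c ^ N * p ^ N = 0 := by rw [← P5, ← mul_assoc, P8, zero_mul]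
  have hBz : b ^ N * (p ^ N + y) = e + c ^ N * y := by
    rw [P9, add_mul, mul_add, mul_add, P1, hsy, hcp, add_zero, zero_add]
  have hzB : (p ^ N + y) * b ^ N = e + y * c ^ N := by
    rw [P9, mul_add, add_mul, add_mul, P2, hpc, hys, add_zero, zero_add]
  have A1 : b ^ N * (p ^ N + y) * b ^ N = b ^ N := by
    rw [hBz, P9, add_mul, mul_add, mul_add, P3, P7, mul_assoc, hys, mul_zero, hg1,
      add_zero, zero_add]
  have A2 : (p ^ N + y) * b ^ N * (p ^ N + y) = p ^ N + y := by
    rw [mul_assoc, hBz, mul_add, add_mul, add_mul, P6, hye, ← mul_assoc, hpc, zero_mul,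
      ← mul_assoc, hg2, add_zero, zero_add]
  have A3 : b ^ N * (p ^ N + y) = (p ^ N + y) * b ^ N := by rw [hBz, hzB, hg3]
  have M3 : star (b ^ N * (p ^ N + y)) = b ^ N * (p ^ N + y) := by
    rw [hBz, star_add, hestar, hm3]
  have M4 : star ((p ^ N + y) * b ^ N) = (p ^ N + y) * b ^ N := by
    rw [hzB, star_add, hestar, hm4]
  exact ⟨N, Nat.succ_pos j, p ^ N + y, ⟨A1, A2, A3⟩, ⟨A1, A2, M3, M4⟩⟩

end aux5

/-- Theorem 4.5: let `a`, `b` be pseudo core invertible with `a ≤Ⓓ b` (where `p` is the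
pseudo core inverse of `a`) and suppose `a` is *-DMP. Then `b` is *-DMP iff
`b (1 - a a^Ⓓ)` is *-DMP. -/
theorem stmt_17 [Ring R] [StarRing R] (a b p : R)
    (hp : IsPCore a p) (hb : ∃ q, IsPCore b q)
    (hle : p * a = p * b ∧ a * p = b * p)
    (hDMP : IsStarDMP a) :
    IsStarDMP b ↔ IsStarDMP (b * (1 - a * p)) := by
  have hcomm : a * p = p * a := pcore_comm a p hp hDMP
  obtain ⟨m, hm, hp1, hp2, hp3⟩ := hp
  have hpap : p * a * p = p := pcore_outer hp1 hp2
  have hee : a * p * (a * p) = a * p := by rw [mul_assoc, ← mul_assoc p a p, hpap]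
  have hep : a * p * p = p := by rw [mul_assoc, ← sq, hp2]
  have hpe : p * (a * p) = p := by rw [← mul_assoc, hpap]
  have hebbe : a * p * b = b * (a * p) := by
    have heb : a * p * b = a * p * a := by rw [mul_assoc, ← hle.1, ← mul_assoc]
    have hbe : b * (a * p) = a * p * a := by
      conv_lhs => rw [hcomm]
      rw [← mul_assoc, ← hle.2]
    rw [heb, hbe]
  constructor
  · intro h
    exact to_corner b (a * p) hee hp3 hebbe h
  · intro h
    have hb' : b = b * (a * p) + b * (1 - a * p) := by noncomm_ring
    have hsp : b * (a * p) * p = a * p := by rw [mul_assoc, hep, ← hle.2]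
    have hps : p * (b * (a * p)) = a * p := by rw [← mul_assoc, ← hle.1, ← hcomm, hee]
    have hse : b * (a * p) * (a * p) = b * (a * p) := by rw [mul_assoc, hee]
    have hes : a * p * (b * (a * p)) = b * (a * p) := by
      rw [← mul_assoc, hebbe, mul_assoc, hee]
    have hzero : a * p * (1 - a * p) = 0 := by rw [mul_sub, mul_one, hee, sub_self]
    have hec : a * p * (b * (1 - a * p)) = 0 := by
      rw [← mul_assoc, hebbe, mul_assoc, hzero, mul_zero]
    have hzero' : (1 - a * p) * (a * p) = 0 := by rw [sub_mul, one_mul, hee, sub_self]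
    have hce : b * (1 - a * p) * (a * p) = 0 := by rw [mul_assoc, hzero', mul_zero]
    have hsc : b * (a * p) * (b * (1 - a * p)) = 0 := by rw [mul_assoc, hec, mul_zero]
    have hx : (1 - a * p) * (b * (a * p)) = 0 := by rw [sub_mul, one_mul, hes, sub_self]
    have hcs : b * (1 - a * p) * (b * (a * p)) = 0 := by rw [mul_assoc, hx, mul_zero]
    exact of_corner b (b * (a * p)) (b * (1 - a * p)) p (a * p) hb' hsp hps hse hes hep hpe
      hec hce hsc hcs hp3 h
end

section
/- Let R be a unital *-ring and let a, b ∈ R be pseudo core invertible. Then the following are equivalent: (1) a a^Ⓓ = b b^Ⓓ a a^Ⓓ; (2) a a^Ⓓ = a a^Ⓓ b b^Ⓓ; (3) a^Ⓓ = a^Ⓓ b b^Ⓓ; (4) R a^Ⓓ ⊆ R a^Ⓓ b b^Ⓓ (i.e., the left principal ideal generated by a^Ⓓ is contained in that generated by a^Ⓓ b b^Ⓓ). -/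
variable {R : Type*}

lemma pcore_aux [Ring R] [StarRing R] {a p : R} (hp : IsPCore a p) :
    p * a * p = p ∧ a * p * (a * p) = a * p := by
  obtain ⟨m, _, h1, h2, _⟩ := hp
  have key : ∀ n : ℕ, a ^ n * p ^ (n + 1) = p := by
    intro n
    induction n with
    | zero => simp
    | succ n ih =>
      have e : p ^ (n + 1 + 1) = p ^ 2 * p ^ n := by
        rw [show n + 1 + 1 = 2 + n from by omega, pow_add]
      calc a ^ (n + 1) * p ^ (n + 1 + 1) = a ^ n * (a * p ^ 2) * p ^ n := by
            rw [pow_succ a n, e]; noncomm_ring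
        _ = a ^ n * p ^ (n + 1) := by rw [h2, pow_succ' p n]; noncomm_ring
        _ = p := ih
  have hpap : p * a * p = p := by
    have h3 : p * a * p = p * a * (a ^ m * p ^ (m + 1)) := by rw [key m]
    rw [h3, show p * a * (a ^ m * p ^ (m + 1)) = p * (a * a ^ m) * p ^ (m + 1)
        from by noncomm_ring, ← pow_succ' a m, h1, key m]
  refine ⟨hpap, ?_⟩
  rw [show a * p * (a * p) = a * (p * a * p) from by noncomm_ring, hpap]

/-- Proposition 5.1: equivalences for `a a^Ⓓ = b b^Ⓓ a a^Ⓓ`, where `p`, `q` are the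
pseudo core inverses of `a`, `b`. -/
theorem stmt_18 [Ring R] [StarRing R] (a b p q : R)
    (hp : IsPCore a p) (hq : IsPCore b q) :
    List.TFAE
      [ a * p = b * q * (a * p),
        a * p = a * p * (b * q),
        p = p * (b * q),
        ∀ r : R, ∃ s : R, r * p = s * (p * (b * q)) ] := by
  obtain ⟨hpap, hapap⟩ := pcore_aux hp
  obtain ⟨hqbq, hbqbq⟩ := pcore_aux hq
  obtain ⟨m, _, _, _, hps⟩ := hp
  obtain ⟨n, _, _, _, hqs⟩ := hq
  tfae_have 1 → 2 := by
    intro h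
    calc a * p = star (a * p) := hps.symm
      _ = star (b * q * (a * p)) := by rw [← h]
      _ = star (a * p) * star (b * q) := by rw [star_mul]
      _ = a * p * (b * q) := by rw [hps, hqs]
  tfae_have 2 → 1 := by
    intro h
    calc a * p = star (a * p) := hps.symm
      _ = star (a * p * (b * q)) := by rw [← h]
      _ = star (b * q) * star (a * p) := by rw [star_mul]
      _ = b * q * (a * p) := by rw [hps, hqs]
  tfae_have 2 → 3 := by
    intro h
    calc p = p * (a * p) := by rw [show p * (a * p) = p * a * p from by noncomm_ring, hpap]
      _ = p * (a * p * (b * q)) := by rw [← h]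
      _ = p * a * p * (b * q) := by noncomm_ring
      _ = p * (b * q) := by rw [hpap]
  tfae_have 3 → 2 := by
    intro h
    calc a * p = a * (p * (b * q)) := by rw [← h]
      _ = a * p * (b * q) := by noncomm_ring
  tfae_have 3 → 4 := by
    intro h r
    exact ⟨r, by conv_rhs => rw [← h]⟩
  tfae_have 4 → 3 := by
    intro h
    obtain ⟨s, hs⟩ := h 1
    rw [one_mul] at hs
    have : p * (b * q) = p := by
      calc p * (b * q) = s * (p * (b * q)) * (b * q) := by rw [← hs]
        _ = s * (p * (b * q * (b * q))) := by noncomm_ring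
        _ = s * (p * (b * q)) := by rw [hbqbq]
        _ = p := hs.symm
    exact this.symm
  tfae_finish
end
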